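/- arXiv:2006.02953 — 6 statements merged into one kernel-verified Lean document; each statement's English description precedes it below -/
import Mathlib

section
/- Let g : (0,∞) → ℝ satisfy ∫₀^∞ |g(x)| dx < ∞ and ∫₀^∞ |g(x)|/x dx < ∞. Then the function g^×(t) = ∫₀^∞ {x/t} g(x)/x dx (where {·} denotes the fractional part) is square integrable on (0,∞). -/
open MeasureTheory Set

/-- The multiplicative convolution of `g` with the fractional part:
`g^×(t) = ∫₀^∞ {x/t} g(x)/x dx`. -/
noncomputable def mulConvFract (g : ℝ → ℝ) (t : ℝ) : ℝ :=
  ∫ x in Ioi (0 : ℝ), Int.fract (x / t) * g x / x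

/-!
Since `0 ≤ {x/t} ≤ min 1 (x/t)` for `x, t > 0`, the integrand of `g^×(t)` is dominated both by
`|g x| / x` and by `|g x| / t`, so `|g^×(t)| ≤ min C₂ (C₁ / t)` with `C₁ = ∫₀^∞ |g|` and
`C₂ = ∫₀^∞ |g(x)|/x dx`. This majorant is bounded near `0` and `O(1/t)` at infinity, hence
square integrable on `(0,∞)`.
-/

theorem memLp_two_min_const_div {a b : ℝ} (ha : 0 ≤ a) (hb : 0 ≤ b) :
    MemLp (fun t => min a (b / t)) 2 (volume.restrict (Ioi 0)) := by
  have hmeas : Measurable fun t : ℝ => min a (b / t) :=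
    measurable_const.min (measurable_const.div measurable_id)
  rw [memLp_two_iff_integrable_sq hmeas.aestronglyMeasurable]
  change IntegrableOn (fun t : ℝ => min a (b / t) ^ 2) (Ioi 0)
  rw [← Ioc_union_Ioi_eq_Ioi zero_le_one]
  refine IntegrableOn.union ?_ ?_
  · refine Integrable.mono' (g := fun _ => a ^ 2) (integrableOn_const (by simp))
      (hmeas.pow_const 2).aestronglyMeasurable ?_
    rw [ae_restrict_iff' measurableSet_Ioc]
    refine ae_of_all _ fun t ht => ?_
    have : 0 ≤ min a (b / t) := le_min ha (div_nonneg hb ht.1.le)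
    rw [Real.norm_eq_abs, abs_of_nonneg (by positivity)]
    exact pow_le_pow_left₀ this (min_le_left _ _) 2
  · refine Integrable.mono' (g := fun t => b ^ 2 * t ^ (-2 : ℝ))
      ((integrableOn_Ioi_rpow_of_lt (by norm_num) one_pos).const_mul _)
      (hmeas.pow_const 2).aestronglyMeasurable ?_
    rw [ae_restrict_iff' measurableSet_Ioi]
    refine ae_of_all _ fun t (ht : 1 < t) => ?_
    have ht0 : 0 < t := one_pos.trans ht
    have : 0 ≤ min a (b / t) := le_min ha (div_nonneg hb ht0.le)
    rw [Real.norm_eq_abs, abs_of_nonneg (by positivity), Real.rpow_neg ht0.le,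
      Real.rpow_two, ← div_eq_mul_inv, ← div_pow]
    exact pow_le_pow_left₀ this (min_le_right _ _) 2

theorem stronglyMeasurable_mulConvFract {g : ℝ → ℝ}
    (hg : AEStronglyMeasurable g (volume.restrict (Ioi 0))) :
    StronglyMeasurable (mulConvFract g) := by
  obtain ⟨g', hg'_meas, hg_ae⟩ := hg
  have hcongr : mulConvFract g = fun t => ∫ x in Ioi (0 : ℝ), Int.fract (x / t) * g' x / x :=
    funext fun t => integral_congr_ae <| hg_ae.mono fun x hx => by simp only [hx]
  rw [hcongr]
  refine StronglyMeasurable.integral_prod_right (f := fun t x => Int.fract (x / t) * g' x / x) ?_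
  exact Measurable.stronglyMeasurable <|
    ((measurable_snd.div measurable_fst).fract.mul (hg'_meas.measurable.comp measurable_snd)).div
      measurable_snd

theorem abs_mulConvFract_le_integral {g G : ℝ → ℝ} {t : ℝ} (hG : IntegrableOn G (Ioi 0))
    (h : ∀ x, 0 < x → |Int.fract (x / t) * g x / x| ≤ G x) :
    |mulConvFract g t| ≤ ∫ x in Ioi 0, G x :=
  (abs_integral_le_integral_abs).trans <|
    integral_mono_of_nonneg (ae_of_all _ fun _ => abs_nonneg _) hG <|
      (ae_restrict_iff' measurableSet_Ioi).2 <| ae_of_all _ h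

theorem abs_mulConvFract_le_integral_abs_div {g : ℝ → ℝ} (t : ℝ)
    (hg : IntegrableOn (fun x => g x / x) (Ioi 0)) :
    |mulConvFract g t| ≤ ∫ x in Ioi 0, |g x / x| := by
  refine abs_mulConvFract_le_integral hg.abs fun x _ => ?_
  rw [mul_div_assoc, abs_mul, abs_of_nonneg (Int.fract_nonneg _)]
  exact mul_le_of_le_one_left (abs_nonneg _) (Int.fract_lt_one _).le

theorem abs_mulConvFract_le_integral_abs_div_const {g : ℝ → ℝ} {t : ℝ} (ht : 0 < t)
    (hg : IntegrableOn g (Ioi 0)) :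
    |mulConvFract g t| ≤ (∫ x in Ioi 0, |g x|) / t := by
  rw [← integral_div]
  refine abs_mulConvFract_le_integral (hg.abs.div_const t) fun x hx => ?_
  have hfract : Int.fract (x / t) ≤ x / t := by
    have : (0 : ℝ) ≤ ⌊x / t⌋ := Int.cast_nonneg (Int.floor_nonneg.2 (by positivity))
    rw [Int.fract]
    linarith
  calc |Int.fract (x / t) * g x / x| = Int.fract (x / t) * (|g x| / x) := by
        rw [mul_div_assoc, abs_mul, abs_of_nonneg (Int.fract_nonneg _), abs_div, abs_of_pos hx]
    _ ≤ x / t * (|g x| / x) := by gcongr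
    _ = |g x| / t := by field_simp

/-- if `∫₀^∞ |g| < ∞` and `∫₀^∞ |g(x)|/x dx < ∞`, then
`g^×` is square integrable on `(0,∞)`. -/
theorem stmt0 (g : ℝ → ℝ)
    (hM1 : IntegrableOn g (Ioi 0) volume)
    (hM2 : IntegrableOn (fun x => g x / x) (Ioi 0) volume) :
    MemLp (mulConvFract g) 2 (volume.restrict (Ioi 0)) := by
  have hC₁ : 0 ≤ ∫ x in Ioi (0 : ℝ), |g x| := integral_nonneg fun _ => abs_nonneg _
  have hC₂ : 0 ≤ ∫ x in Ioi (0 : ℝ), |g x / x| := integral_nonneg fun _ => abs_nonneg _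
  refine (memLp_two_min_const_div hC₂ hC₁).of_le
    (stronglyMeasurable_mulConvFract hM1.1).aestronglyMeasurable ?_
  rw [ae_restrict_iff' measurableSet_Ioi]
  refine ae_of_all _ fun t (ht : 0 < t) => ?_
  rw [Real.norm_eq_abs, Real.norm_eq_abs, abs_of_nonneg (le_min hC₂ (div_nonneg hC₁ ht.le))]
  exact le_min (abs_mulConvFract_le_integral_abs_div t hM2)
    (abs_mulConvFract_le_integral_abs_div_const ht hM1)
end

section
/- Let Z be a nonnegative random variable with E[Z] < ∞. Then the function t ↦ E[{Z/t}] (where {·} denotes the fractional part) is square integrable on (0,∞), and in fact ∫₀^∞ (E[{Z/t}])² dt ≤ E[Z] · ∫₀^∞ {1/t}² dt. -/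
/-!
By Jensen's inequality, `E[{Z/t}]² ≤ E[{Z/t}²]` for every `t`. By Tonelli, integrating in `t`
and exchanging the order of integration gives `E[∫₀^∞ {Z/t}² dt]`, and the substitution
`t = z s` shows `∫₀^∞ {z/t}² dt = z ∫₀^∞ {1/s}² ds` for every `z ≥ 0`; the last integral is finite
because `{1/t} ≤ 1` on `(0, 1]` and `{1/t} = 1/t` on `(1, ∞)`.
-/

open MeasureTheory Set

section

variable {α : Type*} [MeasurableSpace α] {μ : Measure α}

lemma sq_integral_le_integral_sq [IsProbabilityMeasure μ] {f : α → ℝ} (hf : MemLp f 2 μ) :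
    (∫ x, f x ∂μ) ^ 2 ≤ ∫ x, f x ^ 2 ∂μ := by
  have h := ProbabilityTheory.variance_nonneg f μ
  rw [ProbabilityTheory.variance_eq_sub hf] at h
  simpa only [Pi.pow_apply, sub_nonneg] using h

lemma memLp_fract_comp [IsFiniteMeasure μ] {f : α → ℝ} (hf : AEMeasurable f μ) (p : ENNReal) :
    MemLp (fun x => Int.fract (f x)) p μ :=
  MemLp.of_bound (measurable_fract.comp_aemeasurable hf).aestronglyMeasurable 1 <|
    ae_of_all _ fun x => by
      rw [Real.norm_eq_abs, abs_of_nonneg (Int.fract_nonneg _)]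
      exact (Int.fract_lt_one _).le

lemma memLp_two_and_integral_sq_le_of_lintegral_le {f : α → ℝ} (hf : AEStronglyMeasurable f μ)
    {c : ℝ} (hc : 0 ≤ c) (h : ∫⁻ x, ENNReal.ofReal (f x ^ 2) ∂μ ≤ ENNReal.ofReal c) :
    MemLp f 2 μ ∧ ∫ x, f x ^ 2 ∂μ ≤ c := by
  have hsq : 0 ≤ᵐ[μ] fun x => f x ^ 2 := ae_of_all _ fun x => sq_nonneg (f x)
  have hsqm : AEStronglyMeasurable (fun x => f x ^ 2) μ := hf.pow 2
  refine ⟨(memLp_two_iff_integrable_sq hf).2 ?_, ?_⟩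
  · exact (lintegral_ofReal_ne_top_iff_integrable hsqm hsq).1
      (ne_top_of_le_ne_top ENNReal.ofReal_ne_top h)
  · rw [integral_eq_lintegral_of_nonneg_ae hsq hsqm]
    exact ENNReal.toReal_le_of_le_ofReal hc h

end

lemma integrableOn_fract_one_div_sq :
    IntegrableOn (fun t : ℝ => Int.fract (1 / t) ^ 2) (Ioi 0) := by
  rw [← Ioc_union_Ioi_eq_Ioi zero_le_one]
  refine IntegrableOn.union ?_ ?_
  · exact (memLp_fract_comp (measurable_const.div measurable_id).aemeasurable 2).integrable_sq
  · refine (integrableOn_Ioi_rpow_of_lt (by norm_num : (-2 : ℝ) < -1) one_pos).congr_fun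
      (fun t (ht : 1 < t) => ?_) measurableSet_Ioi
    have ht0 : 0 < t := one_pos.trans ht
    show t ^ (-2 : ℝ) = Int.fract (1 / t) ^ 2
    rw [Int.fract_eq_self.2 ⟨by positivity, (div_lt_one ht0).2 ht⟩, Real.rpow_neg ht0.le]
    norm_num

lemma lintegral_fract_div_sq {z : ℝ} (hz : 0 ≤ z) :
    ∫⁻ t in Ioi 0, ENNReal.ofReal (Int.fract (z / t) ^ 2) =
      ENNReal.ofReal (z * ∫ t in Ioi 0, Int.fract (1 / t) ^ 2) := by
  rcases hz.eq_or_lt with rfl | hz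
  · simp
  have hscale (t : ℝ) : Int.fract (z / (z * t)) ^ 2 = Int.fract (1 / t) ^ 2 := by
    rw [← div_div, div_self hz.ne']
  have hint : IntegrableOn (fun t => Int.fract (z / t) ^ 2) (Ioi 0) := by
    have h := integrableOn_Ioi_comp_mul_left_iff (fun t => Int.fract (z / t) ^ 2) 0 hz
    rw [mul_zero] at h
    exact h.1 (by simpa only [hscale] using integrableOn_fract_one_div_sq)
  have hsub := integral_comp_mul_left_Ioi (fun t => Int.fract (z / t) ^ 2) 0 hz
  simp only [mul_zero, hscale, smul_eq_mul] at hsub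
  rw [← ofReal_integral_eq_lintegral_ofReal hint (ae_of_all _ fun t => sq_nonneg _), hsub,
    ← mul_assoc, mul_inv_cancel₀ hz.ne', one_mul]

section

variable {Ω : Type*} [MeasurableSpace Ω] {μ : Measure Ω} {Z : Ω → ℝ}

lemma aemeasurable_fract_div (hZ : AEMeasurable Z μ) (ν : Measure ℝ) [SFinite ν] :
    AEMeasurable (fun p : ℝ × Ω => Int.fract (Z p.2 / p.1)) (ν.prod μ) :=
  measurable_fract.comp_aemeasurable (hZ.comp_snd.div measurable_fst.aemeasurable)

lemma lintegral_sq_integral_fract_div_le [IsProbabilityMeasure μ] (hZ0 : 0 ≤ᵐ[μ] Z)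
    (hZ : Integrable Z μ) :
    ∫⁻ t in Ioi 0, ENNReal.ofReal ((∫ ω, Int.fract (Z ω / t) ∂μ) ^ 2) ≤
      ENNReal.ofReal ((∫ ω, Z ω ∂μ) * ∫ t in Ioi 0, Int.fract (1 / t) ^ 2) := by
  set C := ∫ t in Ioi (0 : ℝ), Int.fract (1 / t) ^ 2
  have hjensen (t : ℝ) : ENNReal.ofReal ((∫ ω, Int.fract (Z ω / t) ∂μ) ^ 2) ≤
      ∫⁻ ω, ENNReal.ofReal (Int.fract (Z ω / t) ^ 2) ∂μ := by
    have hmem := memLp_fract_comp (hZ.aemeasurable.div_const t) 2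
    rw [← ofReal_integral_eq_lintegral_ofReal hmem.integrable_sq
      (ae_of_all _ fun ω => sq_nonneg _)]
    exact ENNReal.ofReal_le_ofReal (sq_integral_le_integral_sq hmem)
  calc ∫⁻ t in Ioi (0 : ℝ), ENNReal.ofReal ((∫ ω, Int.fract (Z ω / t) ∂μ) ^ 2)
      ≤ ∫⁻ t in Ioi (0 : ℝ), ∫⁻ ω, ENNReal.ofReal (Int.fract (Z ω / t) ^ 2) ∂μ :=
        lintegral_mono hjensen
    _ = ∫⁻ ω, (∫⁻ t in Ioi (0 : ℝ), ENNReal.ofReal (Int.fract (Z ω / t) ^ 2)) ∂μ :=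
        lintegral_lintegral_swap
          ((aemeasurable_fract_div hZ.aemeasurable _).pow_const 2).ennreal_ofReal
    _ = ∫⁻ ω, ENNReal.ofReal (Z ω) * ENNReal.ofReal C ∂μ :=
        lintegral_congr_ae <| hZ0.mono fun ω hω =>
          (lintegral_fract_div_sq hω).trans (ENNReal.ofReal_mul hω)
    _ = ENNReal.ofReal ((∫ ω, Z ω ∂μ) * C) := by
        rw [lintegral_mul_const' _ _ ENNReal.ofReal_ne_top,
          ← ofReal_integral_eq_lintegral_ofReal hZ hZ0,
          ENNReal.ofReal_mul (integral_nonneg_of_ae hZ0)]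

end

/-- for a nonnegative integrable random variable `Z`, the function
`t ↦ E[{Z/t}]` is square integrable on `(0,∞)`, with
`∫₀^∞ (E[{Z/t}])² dt ≤ E[Z] · ∫₀^∞ {1/t}² dt`. -/
theorem stmt2 {Ω : Type*} [MeasurableSpace Ω] (μ : Measure Ω) [IsProbabilityMeasure μ]
    (Z : Ω → ℝ) (hZpos : ∀ ω, 0 ≤ Z ω) (hZint : Integrable Z μ) :
    MemLp (fun t : ℝ => ∫ ω, Int.fract (Z ω / t) ∂μ) 2 (volume.restrict (Ioi 0)) ∧
    ∫ t in Ioi (0 : ℝ), (∫ ω, Int.fract (Z ω / t) ∂μ) ^ 2 ≤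
      (∫ ω, Z ω ∂μ) * ∫ t in Ioi (0 : ℝ), Int.fract (1 / t) ^ 2 := by
  have hF : AEStronglyMeasurable (fun t : ℝ => ∫ ω, Int.fract (Z ω / t) ∂μ)
      (volume.restrict (Ioi 0)) :=
    (aemeasurable_fract_div hZint.aemeasurable _).aestronglyMeasurable.integral_prod_right'
  exact memLp_two_and_integral_sq_le_of_lintegral_le hF
    (mul_nonneg (integral_nonneg hZpos) (integral_nonneg fun t => sq_nonneg _))
    (lintegral_sq_integral_fract_div_le (ae_of_all _ hZpos) hZint)
end

section
/- Let M > 0, let g : (0,∞) → ℝ satisfy ∫₀^∞ |g(x)| dx < ∞ and ∫₀^∞ |g(x)|/x dx < ∞, and let φ : (0,∞) → ℝ be square integrable. Set g^×(t) = ∫₀^∞ {x/t} g(x)/x dx. Then (∫₀^M g(x) dx)² ≤ 3M · ∫_M^∞ (φ(t) - g^×(t))² dt + 3M · ∫_M^∞ φ(t)² dt + 3 · (∫_M^∞ |g(x)| dx)². -/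
/-!
For `t ≥ M` the kernel `t {x/t} / x` equals `1` on `(0, M)` and lies in `[0, 1]` everywhere, so
`|t g^×(t) - ∫₀^M g| ≤ ∫_M^∞ |g|`. Hence for `t > M`
`|∫₀^M g| / t ≤ |φ(t) - g^×(t)| + |φ(t)| + (∫_M^∞ |g|) / t`; squaring with
`(a + b + c)² ≤ 3 (a² + b² + c²)` and integrating over `(M, ∞)`, where `∫ t⁻² = 1 / M`, gives the
claim. The same estimate gives `|g^×(t)| ≤ C / t`, which puts `g^×` in `L²(M, ∞)`; without it
`∫ (φ - g^×)²` could be the junk value `0`.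
-/

open MeasureTheory Set

lemma Int.fract_le_self_of_nonneg {R : Type*} [Ring R] [LinearOrder R] [IsStrictOrderedRing R]
    [FloorRing R] {a : R} (ha : 0 ≤ a) : Int.fract a ≤ a := by
  rw [← Int.self_sub_floor, sub_le_self_iff]
  exact_mod_cast Int.floor_nonneg.mpr ha

lemma abs_fract_div_mul_div_le {t x : ℝ} (ht : 0 < t) (hx : 0 < x) (c : ℝ) :
    |Int.fract (x / t) * c / x| ≤ |c| / t := by
  rw [abs_div, abs_mul, abs_of_nonneg (Int.fract_nonneg _), abs_of_pos hx,
    div_le_div_iff₀ hx ht]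
  calc Int.fract (x / t) * |c| * t ≤ x / t * |c| * t := by
        gcongr; exact Int.fract_le_self_of_nonneg (div_nonneg hx.le ht.le)
    _ = |c| * x := by field_simp

lemma aestronglyMeasurable_mulConvFract {g : ℝ → ℝ}
    (hg : AEMeasurable g (volume.restrict (Ioi 0))) (μ : Measure ℝ) [SFinite μ] :
    AEStronglyMeasurable (mulConvFract g) μ :=
  (((measurable_fract.comp (measurable_snd.div measurable_fst)).aemeasurable.mul
    hg.comp_snd).div measurable_snd.aemeasurable).aestronglyMeasurable.integral_prod_right'

lemma integrableOn_fract_div_mul_div {g : ℝ → ℝ} (hg : IntegrableOn g (Ioi 0)) {t : ℝ}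
    (ht : 0 < t) : IntegrableOn (fun x => Int.fract (x / t) * g x / x) (Ioi 0) := by
  refine (hg.norm.div_const t).mono' ?_ ?_
  · exact (((measurable_fract.comp (measurable_id.div_const t)).aemeasurable.mul
      hg.aemeasurable).div aemeasurable_id).aestronglyMeasurable
  · filter_upwards [ae_restrict_mem measurableSet_Ioi] with x hx
    exact abs_fract_div_mul_div_le ht hx (g x)

lemma abs_mul_mulConvFract_sub_integral_le {g : ℝ → ℝ} (hg : IntegrableOn g (Ioi 0))
    {M t : ℝ} (hM : 0 < M) (hMt : M ≤ t) :
    |t * mulConvFract g t - ∫ x in Ioo 0 M, g x| ≤ ∫ x in Ioi M, |g x| := by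
  have ht : 0 < t := hM.trans_le hMt
  have hint := integrableOn_fract_div_mul_div hg ht
  have hunion : Ioo 0 M ∪ Ici M = Ioi (0 : ℝ) := Ioo_union_Ici_eq_Ioi hM
  have hhead : ∫ x in Ioo 0 M, Int.fract (x / t) * g x / x = (∫ x in Ioo 0 M, g x) / t := by
    rw [← integral_div]
    refine setIntegral_congr_fun measurableSet_Ioo fun x hx => ?_
    have hfract : Int.fract (x / t) = x / t :=
      Int.fract_eq_self.mpr ⟨div_nonneg hx.1.le ht.le, (div_lt_one ht).mpr (hx.2.trans_le hMt)⟩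
    simp only [hfract]
    field_simp [hx.1.ne']
  have htail : t * mulConvFract g t - ∫ x in Ioo 0 M, g x
      = t * ∫ x in Ici M, Int.fract (x / t) * g x / x := by
    rw [mulConvFract, ← hunion, setIntegral_union
      ((Iio_disjoint_Ici le_rfl).mono_left Ioo_subset_Iio_self) measurableSet_Ici
      (hint.mono_set (hunion ▸ subset_union_left)) (hint.mono_set (hunion ▸ subset_union_right)),
      hhead]
    field_simp
    ring
  rw [htail, abs_mul, abs_of_pos ht, ← le_div_iff₀' ht, ← integral_Ici_eq_integral_Ioi,
    ← integral_div]
  refine (abs_integral_le_integral_abs).trans (setIntegral_mono_on ?_ ?_ measurableSet_Ici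
    fun x hx => abs_fract_div_mul_div_le ht (hM.trans_le hx) (g x))
  · exact (hint.mono_set fun x hx => hM.trans_le hx).abs
  · exact (IntegrableOn.mono_set hg.abs fun x (hx : M ≤ x) => hM.trans_le hx).div_const t

lemma inv_sq_eq_rpow_neg_two (t : ℝ) : t⁻¹ ^ 2 = t ^ (-2 : ℝ) := by
  rw [show (-2 : ℝ) = -((2 : ℕ) : ℝ) by norm_num, Real.rpow_neg_natCast, zpow_neg, zpow_natCast,
    inv_pow]

lemma integrableOn_Ioi_inv_sq {M : ℝ} (hM : 0 < M) :
    IntegrableOn (fun t : ℝ => t⁻¹ ^ 2) (Ioi M) := by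
  simpa only [inv_sq_eq_rpow_neg_two] using integrableOn_Ioi_rpow_of_lt (by norm_num) hM

lemma integral_Ioi_inv_sq {M : ℝ} (hM : 0 < M) : ∫ t in Ioi M, t⁻¹ ^ 2 = M⁻¹ := by
  simp only [inv_sq_eq_rpow_neg_two]
  rw [integral_Ioi_rpow_of_lt (by norm_num) hM]
  norm_num [Real.rpow_neg_one]

lemma memLp_mulConvFract {g : ℝ → ℝ} (hg : IntegrableOn g (Ioi 0)) {M : ℝ} (hM : 0 < M) :
    MemLp (mulConvFract g) 2 (volume.restrict (Ioi M)) := by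
  set C := |∫ x in Ioo 0 M, g x| + ∫ x in Ioi M, |g x|
  have hinv : MemLp (fun t : ℝ => t⁻¹) 2 (volume.restrict (Ioi M)) :=
    (memLp_two_iff_integrable_sq measurable_inv.aestronglyMeasurable).mpr
      (integrableOn_Ioi_inv_sq hM)
  refine (hinv.const_mul C).of_le (aestronglyMeasurable_mulConvFract hg.aemeasurable _) ?_
  filter_upwards [ae_restrict_mem measurableSet_Ioi] with t (hMt : M < t)
  have ht : 0 < t := hM.trans hMt
  have hC : |t * mulConvFract g t| ≤ C := by
    have := abs_mul_mulConvFract_sub_integral_le hg hM hMt.le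
    have := abs_sub_abs_le_abs_sub (t * mulConvFract g t) (∫ x in Ioo 0 M, g x)
    linarith
  rw [Real.norm_eq_abs, Real.norm_eq_abs, abs_mul, abs_of_pos (inv_pos.mpr ht),
    ← div_eq_mul_inv, le_div_iff₀ ht]
  rw [abs_mul, abs_of_pos ht, mul_comm] at hC
  exact hC.trans (le_abs_self C)

lemma sq_integral_mul_inv_sq_le {g : ℝ → ℝ} (hg : IntegrableOn g (Ioi 0)) {M t : ℝ}
    (hM : 0 < M) (hMt : M ≤ t) (c : ℝ) :
    (∫ x in Ioo 0 M, g x) ^ 2 * t⁻¹ ^ 2 ≤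
      3 * (c - mulConvFract g t) ^ 2 + 3 * c ^ 2 + 3 * (∫ x in Ioi M, |g x|) ^ 2 * t⁻¹ ^ 2 := by
  have ht : 0 < t := hM.trans_le hMt
  set A := ∫ x in Ioo 0 M, g x
  set R := ∫ x in Ioi M, |g x|
  set E := t * mulConvFract g t - A
  have hE : (E * t⁻¹) ^ 2 ≤ (R * t⁻¹) ^ 2 := by
    refine sq_le_sq.mpr ?_
    rw [abs_mul, abs_mul, abs_of_nonneg (integral_nonneg fun _ => abs_nonneg _ : (0 : ℝ) ≤ R)]
    exact mul_le_mul_of_nonneg_right (abs_mul_mulConvFract_sub_integral_le hg hM hMt)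
      (abs_nonneg _)
  have hA : A * t⁻¹ = c - (c - mulConvFract g t) - E * t⁻¹ := by
    simp only [E]
    field_simp
    ring
  have sq_sub_sub_le (x y z : ℝ) : (x - y - z) ^ 2 ≤ 3 * x ^ 2 + 3 * y ^ 2 + 3 * z ^ 2 := by
    nlinarith [sq_nonneg (x + y), sq_nonneg (x + z), sq_nonneg (y - z)]
  calc A ^ 2 * t⁻¹ ^ 2 = (A * t⁻¹) ^ 2 := by ring
    _ ≤ 3 * c ^ 2 + 3 * (c - mulConvFract g t) ^ 2 + 3 * (E * t⁻¹) ^ 2 := hA ▸ sq_sub_sub_le _ _ _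
    _ ≤ _ := by nlinarith [hE]

theorem stmt7_general (M : ℝ) (hM : 0 < M) (g : ℝ → ℝ)
    (hM1 : IntegrableOn g (Ioi 0) volume)
    (φ : ℝ → ℝ) (hφ : MemLp φ 2 (volume.restrict (Ioi 0))) :
    (∫ x in Ioo (0 : ℝ) M, g x) ^ 2 ≤
      3 * M * (∫ t in Ioi M, (φ t - mulConvFract g t) ^ 2) +
      3 * M * (∫ t in Ioi M, φ t ^ 2) +
      3 * (∫ x in Ioi M, |g x|) ^ 2 := by
  have hφM : MemLp φ 2 (volume.restrict (Ioi M)) :=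
    hφ.mono_measure (Measure.restrict_mono (Ioi_subset_Ioi hM.le) le_rfl)
  have hdiff : IntegrableOn (fun t => (φ t - mulConvFract g t) ^ 2) (Ioi M) :=
    (hφM.sub (memLp_mulConvFract hM1 hM)).integrable_sq
  have hφsq : IntegrableOn (fun t => φ t ^ 2) (Ioi M) := hφM.integrable_sq
  set R := ∫ x in Ioi M, |g x|
  have hinv := integrableOn_Ioi_inv_sq hM
  have hsq : IntegrableOn (fun t => 3 * (φ t - mulConvFract g t) ^ 2 + 3 * φ t ^ 2) (Ioi M) :=
    (hdiff.const_mul 3).add (hφsq.const_mul 3)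
  have h : ∫ t in Ioi M, (∫ x in Ioo 0 M, g x) ^ 2 * t⁻¹ ^ 2 ≤
      ∫ t in Ioi M, (3 * (φ t - mulConvFract g t) ^ 2 + 3 * φ t ^ 2 + 3 * R ^ 2 * t⁻¹ ^ 2) :=
    setIntegral_mono_on (hinv.const_mul _) (hsq.add (hinv.const_mul _)) measurableSet_Ioi
      fun t (hMt : M < t) => sq_integral_mul_inv_sq_le hM1 hM hMt.le (φ t)
  rw [integral_add hsq (hinv.const_mul _), integral_add (hdiff.const_mul 3) (hφsq.const_mul 3),
    integral_const_mul, integral_const_mul, integral_const_mul, integral_const_mul,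
    integral_Ioi_inv_sq hM] at h
  have := mul_le_mul_of_nonneg_left h hM.le
  field_simp at this
  linarith

/-- for `M > 0`, `g` satisfying Assumption (M) and `φ` square integrable
on `(0,∞)`,
`(∫₀^M g)² ≤ 3M ∫_M^∞ (φ - g^×)² + 3M ∫_M^∞ φ² + 3 (∫_M^∞ |g|)²`. -/
theorem stmt7 (M : ℝ) (hM : 0 < M) (g : ℝ → ℝ)
    (hM1 : IntegrableOn g (Ioi 0) volume)
    (hM2 : IntegrableOn (fun x => g x / x) (Ioi 0) volume)
    (φ : ℝ → ℝ) (hφ : MemLp φ 2 (volume.restrict (Ioi 0))) :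
    (∫ x in Ioo (0 : ℝ) M, g x) ^ 2 ≤
      3 * M * (∫ t in Ioi M, (φ t - mulConvFract g t) ^ 2) +
      3 * M * (∫ t in Ioi M, φ t ^ 2) +
      3 * (∫ x in Ioi M, |g x|) ^ 2 :=
  stmt7_general M hM g hM1 φ hφ
end

section
/- Let Y be a nonnegative random variable with E[Y] < ∞, and for each k ≥ 1 let X_k be a Gamma(k,1)-distributed random variable independent of Y. Define ρ(t) = E[{Y/t}] for t > 0, A(u) = ∫₀^∞ ρ(ut)·ρ((1-u)t) dt for 0 < u < 1, and g_k^×(t) = E[{Y/(X_k t)}]. Then for all integers m, n ≥ 0, ⟨g_{n+1}^×, g_{m+1}^×⟩ = ∫₀^1 C(n+m, n) · u^n (1-u)^m · A(u) du, where ⟨f,h⟩ = ∫₀^∞ f(t)h(t) dt and C(n+m,n) is the binomial coefficient. -/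
/-!
By independence, `g_{j+1}^×(t) = ∫₀^∞ γ_j(x) ρ(xt) dx` with `γ_j` the `Γ(j+1, 1)` density, so
`⟨g_{n+1}^×, g_{m+1}^×⟩ = ∫∫ γ_n(x) γ_m(y) ∫₀^∞ ρ(xt) ρ(yt) dt dx dy` by Tonelli. Rescaling `t` by
`x + y` turns the inner integral into `A(x/(x+y)) / (x+y)`, and the Beta–Gamma relation (for
independent `Γ(n+1)` and `Γ(m+1)` variables, `x/(x+y)` is `Beta(n+1, m+1)`-distributed) turns the
remaining double integral into `∫₀¹ B_n^{n+m}(u) A(u) du`.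

Everything is computed with `ℝ≥0∞`-valued integrals, where Tonelli needs no integrability. The first
moment of `Y` enters only through `ρ(s) ≤ E[Y]/s`, which makes `A(u)` finite, so that the real
integral `A` agrees with its `ℝ≥0∞` counterpart.
-/

open MeasureTheory Set ProbabilityTheory Real
open scoped ENNReal Nat

lemma integral_eq_toReal_lintegral_of_ofReal_ae_eq {α : Type*} {mα : MeasurableSpace α}
    {μ : Measure α} {f : α → ℝ} {F : α → ℝ≥0∞} (hF : AEMeasurable F μ) (hf : 0 ≤ᵐ[μ] f)
    (hfF : ∀ᵐ x ∂μ, ENNReal.ofReal (f x) = F x) :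
    ∫ x, f x ∂μ = (∫⁻ x, F x ∂μ).toReal := by
  have hf_eq : (fun x => (F x).toReal) =ᵐ[μ] f := by
    filter_upwards [hf, hfF] with x hx hx' using by rw [← hx', ENNReal.toReal_ofReal hx]
  rw [integral_eq_lintegral_of_nonneg_ae hf (hF.ennreal_toReal.aestronglyMeasurable.congr hf_eq),
    lintegral_congr_ae hfF]

lemma integral_mul_eq_toReal_lintegral_mul {α : Type*} {mα : MeasurableSpace α}
    {μ : Measure α} {f g : α → ℝ} {F G : α → ℝ≥0∞} (hF : AEMeasurable F μ)
    (hG : AEMeasurable G μ) (hf : 0 ≤ᵐ[μ] f) (hg : 0 ≤ᵐ[μ] g)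
    (hfF : ∀ᵐ x ∂μ, ENNReal.ofReal (f x) = F x) (hgG : ∀ᵐ x ∂μ, ENNReal.ofReal (g x) = G x) :
    ∫ x, f x * g x ∂μ = (∫⁻ x, F x * G x ∂μ).toReal := by
  refine integral_eq_toReal_lintegral_of_ofReal_ae_eq (hF.mul hG) ?_ ?_
  · filter_upwards [hf, hg] with x hfx hgx using mul_nonneg hfx hgx
  · filter_upwards [hf, hfF, hgG] with x hfx hfFx hgGx
    rw [ENNReal.ofReal_mul hfx, hfFx, hgGx]

lemma ofReal_integral_fract {Ω : Type*} {mΩ : MeasurableSpace Ω} {μ : Measure Ω}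
    [IsFiniteMeasure μ] {h : Ω → ℝ} (hh : Measurable h) :
    ENNReal.ofReal (∫ ω, Int.fract (h ω) ∂μ) = ∫⁻ ω, ENNReal.ofReal (Int.fract (h ω)) ∂μ := by
  refine ofReal_integral_eq_lintegral_ofReal (Integrable.of_bound hh.fract.aestronglyMeasurable 1
    (ae_of_all _ fun ω => ?_)) (ae_of_all _ fun ω => Int.fract_nonneg _)
  rw [Real.norm_of_nonneg (Int.fract_nonneg _)]
  exact (Int.fract_lt_one _).le

lemma lintegral_comp_prodMk_of_indepFun {Ω β γ : Type*} {mΩ : MeasurableSpace Ω}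
    {mβ : MeasurableSpace β} {mγ : MeasurableSpace γ} {μ : Measure Ω} [IsFiniteMeasure μ]
    {X : Ω → β} {Y : Ω → γ} (hXY : IndepFun X Y μ) (hX : Measurable X) (hY : Measurable Y)
    {f : β × γ → ℝ≥0∞} (hf : Measurable f) :
    ∫⁻ ω, f (X ω, Y ω) ∂μ = ∫⁻ x, ∫⁻ y, f (x, y) ∂μ.map Y ∂μ.map X := by
  rw [← lintegral_prod _ hf.aemeasurable, ← (indepFun_iff_map_prod_eq_prod_map_map
    hX.aemeasurable hY.aemeasurable).mp hXY, lintegral_map hf (hX.prodMk hY)]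

lemma lintegral_Ioi_zero_eq_mul_lintegral_comp_mul_left (g : ℝ → ℝ≥0∞) {b : ℝ} (hb : 0 < b) :
    ∫⁻ x in Ioi 0, g x = ENNReal.ofReal b * ∫⁻ x in Ioi 0, g (b * x) := by
  have himage : (b * ·) '' Ioi (0 : ℝ) = Ioi 0 := by
    simpa using image_const_mul_Ioi_zero hb
  have h := lintegral_image_eq_lintegral_abs_deriv_mul (s := Ioi (0 : ℝ)) measurableSet_Ioi
    (fun x _ => ((hasDerivAt_id' x).const_mul b).hasDerivWithinAt)
    (mul_right_injective₀ hb.ne').injOn g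
  simp only [mul_one, abs_of_pos hb, himage] at h
  rw [h, lintegral_const_mul' _ _ ENNReal.ofReal_ne_top]

lemma lintegral_Ioi_zero_eq_lintegral_Ioo_comp_div (g : ℝ → ℝ≥0∞) :
    ∫⁻ w in Ioi 0, g w = ∫⁻ u in Ioo 0 1, ENNReal.ofReal (u ^ 2)⁻¹ * g ((1 - u) / u) := by
  have himage : (fun u : ℝ => (1 - u) / u) '' Ioo 0 1 = Ioi 0 := by
    ext w
    refine ⟨?_, fun (hw : 0 < w) =>
      ⟨(1 + w)⁻¹, ⟨by positivity, inv_lt_one_of_one_lt₀ (by linarith)⟩, ?_⟩⟩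
    · rintro ⟨u, ⟨hu0, hu1⟩, rfl⟩
      exact div_pos (by linarith) hu0
    · have : 1 + w ≠ 0 := by positivity
      field_simp
      ring
  have hderiv : ∀ u ∈ Ioo (0 : ℝ) 1,
      HasDerivWithinAt (fun u : ℝ => (1 - u) / u) (-(u ^ 2)⁻¹) (Ioo 0 1) u := by
    intro u hu
    have h := ((hasDerivAt_inv hu.1.ne').sub_const 1).hasDerivWithinAt (s := Ioo 0 1)
    refine h.congr (fun x hx => ?_) ?_
    · have := hx.1.ne'
      field_simp
    · have := hu.1.ne'
      field_simp
  have hinj : InjOn (fun u : ℝ => (1 - u) / u) (Ioo 0 1) := by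
    intro a ha b hb h
    have := ha.1.ne'
    have := hb.1.ne'
    field_simp at h
    linarith
  rw [← himage, lintegral_image_eq_lintegral_abs_deriv_mul measurableSet_Ioo hderiv hinj]
  refine setLIntegral_congr_fun measurableSet_Ioo fun u hu => ?_
  have := hu.1
  rw [abs_neg, abs_of_pos (by positivity)]

@[fun_prop]
lemma measurable_gammaPDF (a r : ℝ) : Measurable (gammaPDF a r) :=
  (measurable_gammaPDFReal a r).ennreal_ofReal

lemma lintegral_gammaMeasure (a r : ℝ) {g : ℝ → ℝ≥0∞} (hg : Measurable g) :
    ∫⁻ x, g x ∂gammaMeasure a r = ∫⁻ x in Ioi 0, gammaPDF a r x * g x := by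
  have hind : gammaPDF a r * g = (Ici 0).indicator (gammaPDF a r * g) := by
    ext x
    by_cases hx : x ∈ Ici 0
    · rw [indicator_of_mem hx]
    · rw [indicator_of_notMem hx, Pi.mul_apply, gammaPDF_of_neg (not_le.mp hx), zero_mul]
  rw [gammaMeasure, lintegral_withDensity_eq_lintegral_mul _ (by fun_prop) hg,
    hind, lintegral_indicator measurableSet_Ici, setLIntegral_congr Ioi_ae_eq_Ici.symm]
  rfl

lemma lintegral_gammaPDF_Ioi {a r : ℝ} (ha : 0 < a) (hr : 0 < r) :
    ∫⁻ x in Ioi 0, gammaPDF a r x = 1 := by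
  have := isProbabilityMeasure_gammaMeasure ha hr
  simpa using (lintegral_gammaMeasure a r measurable_const (g := 1)).symm

lemma gammaPDF_natCast_add_one (j : ℕ) (r : ℝ) {x : ℝ} (hx : 0 ≤ x) :
    gammaPDF ((j + 1 : ℕ) : ℝ) r x =
      ENNReal.ofReal (r ^ (j + 1) * x ^ j * exp (-(r * x)) / j !) := by
  rw [gammaPDF_of_nonneg hx, Nat.cast_succ, Real.Gamma_nat_eq_factorial, add_sub_cancel_right,
    ← Nat.cast_succ, rpow_natCast, rpow_natCast, div_mul_eq_mul_div, div_mul_eq_mul_div]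

lemma lintegral_pow_mul_exp_neg_mul_Ioi (j : ℕ) {r : ℝ} (hr : 0 < r) :
    ∫⁻ x in Ioi 0, ENNReal.ofReal (x ^ j * exp (-(r * x))) =
      ENNReal.ofReal (j ! / r ^ (j + 1)) := by
  rw [← mul_one (ENNReal.ofReal _), ← lintegral_gammaPDF_Ioi (a := (j + 1 : ℕ)) (by positivity) hr,
    ← lintegral_const_mul' _ _ ENNReal.ofReal_ne_top]
  refine setLIntegral_congr_fun measurableSet_Ioi fun x (hx : 0 < x) => ?_
  rw [gammaPDF_natCast_add_one j r hx.le, ← ENNReal.ofReal_mul (by positivity)]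
  congr 1
  field_simp

lemma lintegral_gammaPDF_mul_gammaPDF_eq_lintegral_Ioi (n m : ℕ) {F : ℝ → ℝ≥0∞}
    (hF : Measurable F) :
    ∫⁻ x in Ioi 0, ∫⁻ y in Ioi 0, gammaPDF ((n + 1 : ℕ) : ℝ) 1 x *
        gammaPDF ((m + 1 : ℕ) : ℝ) 1 y * ENNReal.ofReal (x + y)⁻¹ * F (x / (x + y))
      = ∫⁻ w in Ioi 0,
          ENNReal.ofReal ((n + m).choose n * w ^ m / (1 + w) ^ (n + m + 2)) * F (1 + w)⁻¹ := by
  set c : ℝ := (n ! * m ! : ℝ)⁻¹ with hc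
  -- after `y = x w` the integrand is a function of `w` times a Gamma kernel in `x`
  have hsubst : ∀ x ∈ Ioi (0 : ℝ), ∫⁻ y in Ioi 0, gammaPDF ((n + 1 : ℕ) : ℝ) 1 x *
        gammaPDF ((m + 1 : ℕ) : ℝ) 1 y * ENNReal.ofReal (x + y)⁻¹ * F (x / (x + y))
      = ∫⁻ w in Ioi 0, ENNReal.ofReal (c * w ^ m / (1 + w)) *
          ENNReal.ofReal (x ^ (n + m) * exp (-((1 + w) * x))) * F (1 + w)⁻¹ := by
    intro x (hx : 0 < x)
    rw [lintegral_Ioi_zero_eq_mul_lintegral_comp_mul_left _ hx,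
      ← lintegral_const_mul' _ _ ENNReal.ofReal_ne_top]
    refine setLIntegral_congr_fun measurableSet_Ioi fun w (hw : 0 < w) => ?_
    rw [gammaPDF_natCast_add_one n 1 hx.le, gammaPDF_natCast_add_one m 1 (by positivity),
      show x / (x + x * w) = (1 + w)⁻¹ by field_simp, ← mul_assoc, ← mul_assoc, ← mul_assoc,
      ← ENNReal.ofReal_mul (by positivity), ← ENNReal.ofReal_mul (by positivity),
      ← ENNReal.ofReal_mul (by positivity), ← ENNReal.ofReal_mul (by positivity)]
    congr 2
    rw [show -((1 + w) * x) = -(1 * x) + -(1 * (x * w)) by ring, exp_add, hc]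
    field_simp
    ring
  rw [setLIntegral_congr_fun measurableSet_Ioi hsubst, lintegral_lintegral_swap (by fun_prop)]
  refine setLIntegral_congr_fun measurableSet_Ioi fun w (hw : 0 < w) => ?_
  rw [lintegral_mul_const _ (by fun_prop), lintegral_const_mul' _ _ ENNReal.ofReal_ne_top,
    lintegral_pow_mul_exp_neg_mul_Ioi _ (by positivity), ← ENNReal.ofReal_mul (by positivity)]
  congr 2
  rw [Nat.cast_choose ℝ (Nat.le_add_right n m), Nat.add_sub_cancel_left, hc]
  field_simp
  ring

lemma lintegral_gammaPDF_mul_gammaPDF_eq_lintegral_beta (n m : ℕ) {F : ℝ → ℝ≥0∞}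
    (hF : Measurable F) :
    ∫⁻ x in Ioi 0, ∫⁻ y in Ioi 0, gammaPDF ((n + 1 : ℕ) : ℝ) 1 x *
        gammaPDF ((m + 1 : ℕ) : ℝ) 1 y * ENNReal.ofReal (x + y)⁻¹ * F (x / (x + y))
      = ∫⁻ u in Ioo 0 1, ENNReal.ofReal ((n + m).choose n * u ^ n * (1 - u) ^ m) * F u := by
  rw [lintegral_gammaPDF_mul_gammaPDF_eq_lintegral_Ioi n m hF,
    lintegral_Ioi_zero_eq_lintegral_Ioo_comp_div]
  refine setLIntegral_congr_fun measurableSet_Ioo fun u ⟨hu0, hu1⟩ => ?_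
  have hu : u ≠ 0 := hu0.ne'
  rw [show 1 + (1 - u) / u = u⁻¹ by field_simp; ring, inv_inv, ← mul_assoc,
    ← ENNReal.ofReal_mul (by positivity)]
  congr 2
  simp only [div_pow, inv_pow]
  field_simp
  ring

lemma lintegral_comp_mul_mul_comp_mul_Ioi {h : ℝ → ℝ≥0∞} {x y : ℝ} (hx : 0 < x) (hy : 0 < y) :
    ∫⁻ t in Ioi 0, h (x * t) * h (y * t) =
      ENNReal.ofReal (x + y)⁻¹ *
        ∫⁻ s in Ioi 0, h (x / (x + y) * s) * h ((1 - x / (x + y)) * s) := by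
  have hxy : 0 < x + y := by positivity
  rw [lintegral_Ioi_zero_eq_mul_lintegral_comp_mul_left
    (fun s => h (x / (x + y) * s) * h ((1 - x / (x + y)) * s)) hxy, ← mul_assoc,
    ← ENNReal.ofReal_mul (by positivity), inv_mul_cancel₀ hxy.ne', ENNReal.ofReal_one, one_mul]
  refine lintegral_congr fun t => ?_
  congr 2
  · field_simp
  · field_simp
    ring

lemma lintegral_gammaMixture_mul_gammaMixture (n m : ℕ) {h : ℝ → ℝ≥0∞} (hh : Measurable h) :
    ∫⁻ t in Ioi 0, (∫⁻ x in Ioi 0, gammaPDF ((n + 1 : ℕ) : ℝ) 1 x * h (x * t)) *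
        (∫⁻ y in Ioi 0, gammaPDF ((m + 1 : ℕ) : ℝ) 1 y * h (y * t))
      = ∫⁻ u in Ioo 0 1, ENNReal.ofReal ((n + m).choose n * u ^ n * (1 - u) ^ m) *
          ∫⁻ s in Ioi 0, h (u * s) * h ((1 - u) * s) := by
  rw [← lintegral_gammaPDF_mul_gammaPDF_eq_lintegral_beta n m (by fun_prop)]
  calc _ = ∫⁻ t in Ioi 0, ∫⁻ x in Ioi 0, ∫⁻ y in Ioi 0,
          gammaPDF ((n + 1 : ℕ) : ℝ) 1 x * h (x * t) *
            (gammaPDF ((m + 1 : ℕ) : ℝ) 1 y * h (y * t)) :=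
        lintegral_congr fun t => (lintegral_lintegral_mul (by fun_prop) (by fun_prop)).symm
    _ = ∫⁻ x in Ioi 0, ∫⁻ y in Ioi 0, ∫⁻ t in Ioi 0,
          gammaPDF ((n + 1 : ℕ) : ℝ) 1 x * h (x * t) *
            (gammaPDF ((m + 1 : ℕ) : ℝ) 1 y * h (y * t)) := by
        rw [lintegral_lintegral_swap (by fun_prop)]
        exact lintegral_congr fun x => lintegral_lintegral_swap (by fun_prop)
    _ = _ := by
        refine setLIntegral_congr_fun measurableSet_Ioi fun x (hx : 0 < x) => ?_
        refine setLIntegral_congr_fun measurableSet_Ioi fun y (hy : 0 < y) => ?_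
        rw [mul_assoc _ (ENNReal.ofReal _), ← lintegral_comp_mul_mul_comp_mul_Ioi hx hy,
          ← lintegral_const_mul _ (by fun_prop)]
        exact lintegral_congr fun t => by ring

noncomputable def fractMean (ν : Measure ℝ) (s : ℝ) : ℝ≥0∞ :=
  ∫⁻ y, ENNReal.ofReal (Int.fract (y / s)) ∂ν

section fractMean

variable {ν : Measure ℝ}

@[fun_prop]
lemma measurable_fractMean [SFinite ν] : Measurable (fractMean ν) :=
  Measurable.lintegral_prod_right' (f := fun p : ℝ × ℝ => ENNReal.ofReal (Int.fract (p.2 / p.1)))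
    (by fun_prop)

lemma fractMean_le_one [IsProbabilityMeasure ν] (s : ℝ) : fractMean ν s ≤ 1 :=
  (lintegral_mono fun y => ENNReal.ofReal_le_one.mpr (Int.fract_lt_one _).le).trans_eq (by simp)

lemma fractMean_le_ofReal_integral_div (hν : ∀ᵐ y ∂ν, 0 ≤ y) (hint : Integrable id ν) {s : ℝ}
    (hs : 0 < s) : fractMean ν s ≤ ENNReal.ofReal ((∫ y, y ∂ν) / s) := by
  have hfract : ∀ᵐ y ∂ν, ENNReal.ofReal (Int.fract (y / s)) ≤ ENNReal.ofReal (y / s) := by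
    filter_upwards [hν] with y hy
    rw [← Int.self_sub_floor]
    exact ENNReal.ofReal_le_ofReal
      (sub_le_self _ (Int.cast_nonneg_iff.mpr (Int.floor_nonneg.mpr (div_nonneg hy hs.le))))
  calc fractMean ν s ≤ ∫⁻ y, ENNReal.ofReal (y / s) ∂ν := lintegral_mono_ae hfract
    _ = ENNReal.ofReal ((∫ y, y ∂ν) / s) := by
      rw [← integral_div, ofReal_integral_eq_lintegral_ofReal (f := (· / s)) (hint.div_const s)]
      filter_upwards [hν] with y hy using div_nonneg hy hs.le

lemma lintegral_fractMean_mul_fractMean_lt_top [IsProbabilityMeasure ν] (hν : ∀ᵐ y ∂ν, 0 ≤ y)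
    (hint : Integrable id ν) {a b : ℝ} (ha : 0 < a) (hb : 0 < b) :
    ∫⁻ s in Ioi 0, fractMean ν (a * s) * fractMean ν (b * s) < ∞ := by
  set E := ∫ y, y ∂ν
  have hE : 0 ≤ E := integral_nonneg_of_ae hν
  rw [← Ioc_union_Ioi_eq_Ioi zero_le_one, lintegral_union measurableSet_Ioi Ioc_disjoint_Ioi_same]
  refine ENNReal.add_lt_top.mpr ⟨?_, ?_⟩
  · calc ∫⁻ s in Ioc 0 1, fractMean ν (a * s) * fractMean ν (b * s)
        ≤ ∫⁻ s in Ioc 0 1, 1 :=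
          lintegral_mono fun s => mul_le_one' (fractMean_le_one _) (fractMean_le_one _)
      _ < ∞ := by simp
  -- on `(1, ∞)` the first-moment bound gives decay `s⁻²`
  have hdecay : IntegrableOn (fun s : ℝ => E ^ 2 / (a * b) * s ^ (-2 : ℝ)) (Ioi 1) :=
    (integrableOn_Ioi_rpow_of_lt (by norm_num) one_pos).const_mul _
  refine lt_of_le_of_lt (setLIntegral_mono' measurableSet_Ioi fun s (hs : 1 < s) => ?_)
    hdecay.lintegral_lt_top
  have hs0 : 0 < s := one_pos.trans hs
  calc fractMean ν (a * s) * fractMean ν (b * s)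
      ≤ ENNReal.ofReal (E / (a * s)) * ENNReal.ofReal (E / (b * s)) :=
        mul_le_mul' (fractMean_le_ofReal_integral_div hν hint (by positivity))
          (fractMean_le_ofReal_integral_div hν hint (by positivity))
    _ = ENNReal.ofReal (E ^ 2 / (a * b) * s ^ (-2 : ℝ)) := by
        rw [← ENNReal.ofReal_mul (by positivity), rpow_neg hs0.le, rpow_two]
        congr 1
        field_simp

end fractMean

lemma ofReal_integral_fract_div_eq_fractMean {Ω : Type*} {mΩ : MeasurableSpace Ω}
    {μ : Measure Ω} [IsFiniteMeasure μ] {Y : Ω → ℝ} (hY : Measurable Y) (s : ℝ) :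
    ENNReal.ofReal (∫ ω, Int.fract (Y ω / s) ∂μ) = fractMean (μ.map Y) s := by
  rw [ofReal_integral_fract (by fun_prop), fractMean, lintegral_map (by fun_prop) hY]

lemma ofReal_setIntegral_integral_fract_mul_eq {Ω : Type*} {mΩ : MeasurableSpace Ω}
    {μ : Measure Ω} [IsProbabilityMeasure μ] {Y : Ω → ℝ} (hY0 : ∀ ω, 0 ≤ Y ω)
    (hYint : Integrable Y μ) (hY : Measurable Y) {a b : ℝ} (ha : 0 < a) (hb : 0 < b) :
    ENNReal.ofReal (∫ t in Ioi 0,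
        (∫ ω, Int.fract (Y ω / (a * t)) ∂μ) * ∫ ω, Int.fract (Y ω / (b * t)) ∂μ) =
      ∫⁻ s in Ioi 0, fractMean (μ.map Y) (a * s) * fractMean (μ.map Y) (b * s) := by
  have : IsProbabilityMeasure (μ.map Y) := Measure.isProbabilityMeasure_map hY.aemeasurable
  have hfract_nonneg : ∀ s, 0 ≤ ∫ ω, Int.fract (Y ω / s) ∂μ := fun s =>
    integral_nonneg fun ω => Int.fract_nonneg _
  rw [integral_mul_eq_toReal_lintegral_mul (by fun_prop) (by fun_prop)
      (ae_of_all _ fun _ => hfract_nonneg _) (ae_of_all _ fun _ => hfract_nonneg _)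
      (ae_of_all _ fun _ => ofReal_integral_fract_div_eq_fractMean hY _)
      (ae_of_all _ fun _ => ofReal_integral_fract_div_eq_fractMean hY _)]
  refine ENNReal.ofReal_toReal (lintegral_fractMean_mul_fractMean_lt_top ?_ ?_ ha hb).ne
  · exact (ae_map_iff hY.aemeasurable measurableSet_Ici).mpr (ae_of_all _ hY0)
  · exact (integrable_map_measure aestronglyMeasurable_id hY.aemeasurable).mpr hYint

lemma ofReal_integral_fract_div_mul_eq_lintegral_gammaPDF_mul_fractMean {Ω : Type*}
    {mΩ : MeasurableSpace Ω} {μ : Measure Ω} [IsFiniteMeasure μ] {X Y : Ω → ℝ}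
    (hXY : IndepFun X Y μ) (hX : Measurable X) (hY : Measurable Y) {j : ℕ}
    (hXlaw : μ.map X = gammaMeasure ((j + 1 : ℕ) : ℝ) 1) (t : ℝ) :
    ENNReal.ofReal (∫ ω, Int.fract (Y ω / (X ω * t)) ∂μ) =
      ∫⁻ x in Ioi 0, gammaPDF ((j + 1 : ℕ) : ℝ) 1 x * fractMean (μ.map Y) (x * t) := by
  rw [ofReal_integral_fract (by fun_prop), lintegral_comp_prodMk_of_indepFun hXY hX hY
      (f := fun p => ENNReal.ofReal (Int.fract (p.2 / (p.1 * t)))) (by fun_prop), hXlaw,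
    ← lintegral_gammaMeasure _ _ (g := fun x => fractMean (μ.map Y) (x * t)) (by fun_prop)]
  rfl

/-- with `Y ≥ 0` integrable, `X k ~ Γ(k,1)` independent of `Y`,
`ρ(t) = E[{Y/t}]`, `A(u) = ∫₀^∞ ρ(ut)ρ((1-u)t) dt` and `g_k^×(t) = E[{Y/(X_k t)}]`,
one has `⟨g_{n+1}^×, g_{m+1}^×⟩ = ∫₀^1 C(n+m,n) uⁿ(1-u)^m A(u) du`. -/
theorem stmt12 {Ω : Type*} [MeasurableSpace Ω] (μ : Measure Ω) [IsProbabilityMeasure μ]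
    (Y : Ω → ℝ) (X : ℕ → Ω → ℝ)
    (hYpos : ∀ ω, 0 ≤ Y ω) (hYint : Integrable Y μ) (hYmeas : Measurable Y)
    (hXmeas : ∀ k, Measurable (X k))
    (hXlaw : ∀ k, 1 ≤ k → Measure.map (X k) μ = gammaMeasure k 1)
    (hindep : ∀ k, IndepFun Y (X k) μ)
    (ρ : ℝ → ℝ) (hρ : ∀ t, ρ t = ∫ ω, Int.fract (Y ω / t) ∂μ)
    (A : ℝ → ℝ) (hA : ∀ u, A u = ∫ t in Ioi (0 : ℝ), ρ (u * t) * ρ ((1 - u) * t))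
    (m n : ℕ) :
    ∫ t in Ioi (0 : ℝ),
        (∫ ω, Int.fract (Y ω / (X (n + 1) ω * t)) ∂μ) *
        (∫ ω, Int.fract (Y ω / (X (m + 1) ω * t)) ∂μ) =
      ∫ u in Ioo (0 : ℝ) 1,
        (Nat.choose (n + m) n : ℝ) * u ^ n * (1 - u) ^ m * A u := by
  have hA_nonneg : ∀ u, 0 ≤ A u := fun u => hA u ▸ integral_nonneg fun t => by
    simp only [hρ]
    exact mul_nonneg (integral_nonneg fun ω => Int.fract_nonneg _)
      (integral_nonneg fun ω => Int.fract_nonneg _)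
  have hA_eq : ∀ u ∈ Ioo (0 : ℝ) 1, ENNReal.ofReal (A u) =
      ∫⁻ s in Ioi 0, fractMean (μ.map Y) (u * s) * fractMean (μ.map Y) ((1 - u) * s) := by
    rintro u ⟨hu0, hu1⟩
    simp only [hA, hρ]
    exact ofReal_setIntegral_integral_fract_mul_eq hYpos hYint hYmeas hu0 (by linarith)
  have hg_eq : ∀ j t, ENNReal.ofReal (∫ ω, Int.fract (Y ω / (X (j + 1) ω * t)) ∂μ) =
      ∫⁻ x in Ioi 0, gammaPDF ((j + 1 : ℕ) : ℝ) 1 x * fractMean (μ.map Y) (x * t) := fun j =>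
    ofReal_integral_fract_div_mul_eq_lintegral_gammaPDF_mul_fractMean (hindep _).symm
      (hXmeas _) hYmeas (hXlaw _ (Nat.le_add_left 1 j))
  have hg_nonneg : ∀ j t, 0 ≤ ∫ ω, Int.fract (Y ω / (X j ω * t)) ∂μ := fun j t =>
    integral_nonneg fun ω => Int.fract_nonneg _
  have hB_nonneg : ∀ᵐ u ∂volume.restrict (Ioo (0 : ℝ) 1),
      0 ≤ ((n + m).choose n : ℝ) * u ^ n * (1 - u) ^ m := by
    filter_upwards [ae_restrict_mem measurableSet_Ioo] with u ⟨hu0, hu1⟩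
    have : 0 ≤ 1 - u := by linarith
    positivity
  rw [integral_mul_eq_toReal_lintegral_mul (by fun_prop) (by fun_prop)
      (ae_of_all _ (hg_nonneg _)) (ae_of_all _ (hg_nonneg _)) (ae_of_all _ (hg_eq n))
      (ae_of_all _ (hg_eq m)), lintegral_gammaMixture_mul_gammaMixture n m measurable_fractMean,
    integral_mul_eq_toReal_lintegral_mul (by fun_prop) (by fun_prop) hB_nonneg
      (ae_of_all _ hA_nonneg) (ae_of_all _ fun _ => rfl)
      ((ae_restrict_iff' measurableSet_Ioo).mpr (ae_of_all _ hA_eq))]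
end

section
/- Let α > 0 and let g_0 ∈ C^∞((0,∞)) satisfy, for every k ≥ 0, lim_{x→0} x^{k-α} g_0^{(k)}(x) = 0 and lim_{x→∞} x^{k+1+α} g_0^{(k)}(x) = 0. Define inductively g_{k+1}(x) = -x·g_k'(x) - (1/2)·g_k(x), and set G_{k,j} = ⟨g_k^×, g_j^×⟩ = ∫₀^∞ g_k^×(t) g_j^×(t) dt. Then for all k ≥ 0 and j ≥ 1, G_{k,j} + G_{k+1,j-1} = 0; in particular G_{k,k+1} = 0 for every k ≥ 0. -/
open MeasureTheory Set Filter

open Real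
open scoped ContDiff

namespace Stmt16

/-- min of two rpow's, integrable on `(0,∞)` when `-1 < a` and `b < -1`. -/
lemma integrableOn_min_rpow {a b : ℝ} (ha : -1 < a) (hb : b < -1) :
    IntegrableOn (fun x : ℝ => min (x ^ a) (x ^ b)) (Ioi (0 : ℝ)) := by
  have hmeas : AEStronglyMeasurable (fun x : ℝ => min (x ^ a) (x ^ b))
      (volume.restrict (Ioi (0:ℝ))) := by
    apply ContinuousOn.aestronglyMeasurable _ measurableSet_Ioi
    intro x hx
    exact Filter.Tendsto.min
      (Real.continuousAt_rpow_const x a (Or.inl (ne_of_gt hx))).continuousWithinAt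
      (Real.continuousAt_rpow_const x b (Or.inl (ne_of_gt hx))).continuousWithinAt
  have h1 : IntegrableOn (fun x : ℝ => min (x ^ a) (x ^ b)) (Ioc (0:ℝ) 1) := by
    have hia : IntegrableOn (fun x : ℝ => x ^ a) (Ioc (0:ℝ) 1) := by
      rw [← intervalIntegrable_iff_integrableOn_Ioc_of_le zero_le_one]
      exact intervalIntegral.intervalIntegrable_rpow' ha
    refine hia.mono' (hmeas.mono_measure (Measure.restrict_mono Ioc_subset_Ioi_self le_rfl)) ?_
    filter_upwards [ae_restrict_mem measurableSet_Ioc] with x hx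
    have hx0 : (0:ℝ) < x := hx.1
    rw [Real.norm_eq_abs, abs_of_nonneg (le_min (Real.rpow_nonneg hx0.le a)
      (Real.rpow_nonneg hx0.le b))]
    exact min_le_left _ _
  have h2 : IntegrableOn (fun x : ℝ => min (x ^ a) (x ^ b)) (Ioi (1:ℝ)) := by
    have hib := integrableOn_Ioi_rpow_of_lt hb one_pos
    refine hib.mono' (hmeas.mono_measure (Measure.restrict_mono (Ioi_subset_Ioi zero_le_one) le_rfl)) ?_
    filter_upwards [ae_restrict_mem measurableSet_Ioi] with x hx
    have hx0 : (0:ℝ) < x := lt_trans one_pos hx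
    rw [Real.norm_eq_abs, abs_of_nonneg (le_min (Real.rpow_nonneg hx0.le a)
      (Real.rpow_nonneg hx0.le b))]
    exact min_le_right _ _
  have : Ioi (0:ℝ) = Ioc (0:ℝ) 1 ∪ Ioi 1 := (Ioc_union_Ioi_eq_Ioi zero_le_one).symm
  rw [this]
  exact h1.union h2

/-- comparison against the master min function. -/
lemma integrableOn_of_le_min {f : ℝ → ℝ} {C a b : ℝ} (ha : -1 < a) (hb : b < -1)
    (hm : AEStronglyMeasurable f (volume.restrict (Ioi (0:ℝ))))
    (h : ∀ x ∈ Ioi (0:ℝ), |f x| ≤ C * min (x ^ a) (x ^ b)) :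
    IntegrableOn f (Ioi (0 : ℝ)) := by
  refine ((integrableOn_min_rpow ha hb).const_mul C).mono' hm ?_
  filter_upwards [ae_restrict_mem measurableSet_Ioi] with x hx
  simpa [Real.norm_eq_abs] using h x hx


/-- pointwise bound from the two limit hypotheses plus continuity. -/
lemma exists_MB {α : ℝ} (hα : 0 < α) {f : ℝ → ℝ} (hc : ContinuousOn f (Ioi 0))
    (h0 : Tendsto (fun x : ℝ => x ^ (-α) * f x) (nhdsWithin 0 (Ioi 0)) (nhds 0))
    (hi : Tendsto (fun x : ℝ => x ^ (1 + α) * f x) atTop (nhds 0)) :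
    ∃ C : ℝ, 0 ≤ C ∧ ∀ x ∈ Ioi (0:ℝ), |f x| ≤ C * min (x ^ α) (x ^ (-1 - α)) := by
  -- near 0
  have h0' : ∀ᶠ x in nhdsWithin (0:ℝ) (Ioi 0), |x ^ (-α) * f x| < 1 := by
    have := h0.eventually (eventually_abs_sub_lt 0 one_pos)
    simpa using this
  rw [eventually_nhdsWithin_iff, Metric.eventually_nhds_iff] at h0'
  obtain ⟨δ₀, hδ₀, hδ⟩ := h0'
  set δ : ℝ := min δ₀ 1 with hδdef
  have hδpos : 0 < δ := lt_min hδ₀ one_pos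
  have hδ1 : δ ≤ 1 := min_le_right _ _
  have hnear : ∀ x : ℝ, 0 < x → x < δ → |f x| ≤ x ^ α := by
    intro x hx hxδ
    have h1 : |x ^ (-α) * f x| < 1 := by
      apply hδ (y := x) _ hx
      rw [Real.dist_eq, sub_zero, abs_of_pos hx]
      exact lt_of_lt_of_le hxδ (min_le_left _ _)
    have hxα : (0:ℝ) < x ^ (-α) := Real.rpow_pos_of_pos hx _
    rw [abs_mul, abs_of_pos hxα] at h1
    have := (le_of_lt h1)
    calc |f x| = (x ^ (-α) * |f x|) * x ^ α := by
          rw [Real.rpow_neg hx.le]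
          field_simp
      _ ≤ 1 * x ^ α := by
          apply mul_le_mul_of_nonneg_right this (Real.rpow_nonneg hx.le _)
      _ = x ^ α := one_mul _
  -- near infinity
  have hi' : ∀ᶠ x in atTop, |x ^ (1+α) * f x| < 1 := by
    have := hi.eventually (eventually_abs_sub_lt 0 one_pos)
    simpa using this
  obtain ⟨M₀, hM⟩ := hi'.exists_forall_of_atTop
  set M : ℝ := max M₀ 1 with hMdef
  have hM1 : (1:ℝ) ≤ M := le_max_right _ _
  have hfar : ∀ x : ℝ, M ≤ x → |f x| ≤ x ^ (-1-α) := by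
    intro x hx
    have hx0 : (0:ℝ) < x := lt_of_lt_of_le one_pos (hM1.trans hx)
    have h1 : |x ^ (1+α) * f x| < 1 := hM x ((le_max_left _ _).trans hx)
    have hxα : (0:ℝ) < x ^ (1+α) := Real.rpow_pos_of_pos hx0 _
    rw [abs_mul, abs_of_pos hxα] at h1
    calc |f x| = (x ^ (1+α) * |f x|) * x ^ (-1-α) := by
          rw [show (-1-α : ℝ) = -(1+α) by ring, Real.rpow_neg hx0.le]
          field_simp
      _ ≤ 1 * x ^ (-1-α) := mul_le_mul_of_nonneg_right h1.le (Real.rpow_nonneg hx0.le _)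
      _ = x ^ (-1-α) := one_mul _
  -- middle compact part
  have hKsub : Icc δ M ⊆ Ioi (0:ℝ) := fun x hx => lt_of_lt_of_le hδpos hx.1
  obtain ⟨B, hB⟩ := (isCompact_Icc (a := δ) (b := M)).exists_bound_of_continuousOn
      (hc.mono hKsub)
  -- min of the comparison function on the compact part
  set φ : ℝ → ℝ := fun x => min (x ^ α) (x ^ (-1-α)) with hφ
  have hφpos : ∀ x ∈ Ioi (0:ℝ), 0 < φ x := fun x hx =>
    lt_min (Real.rpow_pos_of_pos hx _) (Real.rpow_pos_of_pos hx _)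
  have hφcont : ContinuousOn φ (Icc δ M) := by
    intro x hx
    have hx0 : (0:ℝ) < x := hKsub hx
    exact Filter.Tendsto.min
      (Real.continuousAt_rpow_const x α (Or.inl (ne_of_gt hx0))).continuousWithinAt
      (Real.continuousAt_rpow_const x (-1-α) (Or.inl (ne_of_gt hx0))).continuousWithinAt
  by_cases hδM : δ ≤ M
  · obtain ⟨x₀, hx₀K, hx₀'⟩ := (isCompact_Icc (a := δ) (b := M)).exists_isMinOn
      (nonempty_Icc.2 hδM) hφcont
    have hx₀ : ∀ x ∈ Icc δ M, φ x₀ ≤ φ x := fun x hx => hx₀' hx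
    set m : ℝ := φ x₀ with hm
    have hmpos : 0 < m := hφpos x₀ (hKsub hx₀K)
    refine ⟨max 1 (|B| / m), le_trans zero_le_one (le_max_left _ _), ?_⟩
    intro x hx
    have hx0 : (0:ℝ) < x := hx
    have hφnn : 0 ≤ φ x := (hφpos x hx).le
    rcases lt_or_ge x δ with hcase | hcase
    · -- x < δ ≤ 1 : min is x ^ α
      have hx1 : x ≤ 1 := le_of_lt (lt_of_lt_of_le hcase hδ1)
      have : x ^ α ≤ x ^ (-1-α) :=
        Real.rpow_le_rpow_of_exponent_ge hx0 hx1 (by linarith)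
      have hmin : φ x = x ^ α := min_eq_left this
      calc |f x| ≤ x ^ α := hnear x hx0 hcase
        _ = 1 * φ x := by rw [hmin, one_mul]
        _ ≤ max 1 (|B| / m) * φ x :=
            mul_le_mul_of_nonneg_right (le_max_left _ _) hφnn
    rcases le_or_gt x M with hcase2 | hcase2
    · -- middle
      have hxK : x ∈ Icc δ M := ⟨hcase, hcase2⟩
      have h1 : |f x| ≤ |B| := le_trans (by simpa using hB x hxK) (le_abs_self B)
      have h2 : m ≤ φ x := hx₀ x hxK
      calc |f x| ≤ |B| := h1
        _ = |B| / m * m := by field_simp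
        _ ≤ |B| / m * φ x := by
            apply mul_le_mul_of_nonneg_left h2 (div_nonneg (abs_nonneg _) hmpos.le)
        _ ≤ max 1 (|B| / m) * φ x :=
            mul_le_mul_of_nonneg_right (le_max_right _ _) hφnn
    · -- far
      have hx1 : (1:ℝ) ≤ x := hM1.trans hcase2.le
      have : x ^ (-1-α) ≤ x ^ α :=
        Real.rpow_le_rpow_of_exponent_le hx1 (by linarith)
      have hmin : φ x = x ^ (-1-α) := min_eq_right this
      calc |f x| ≤ x ^ (-1-α) := hfar x hcase2.le
        _ = 1 * φ x := by rw [hmin, one_mul]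
        _ ≤ max 1 (|B| / m) * φ x :=
            mul_le_mul_of_nonneg_right (le_max_left _ _) hφnn
  · -- δ > M : covers everything with the two tails
    push_neg at hδM
    refine ⟨1, zero_le_one, ?_⟩
    intro x hx
    have hx0 : (0:ℝ) < x := hx
    rcases lt_or_ge x δ with hcase | hcase
    · have hx1 : x ≤ 1 := le_of_lt (lt_of_lt_of_le hcase hδ1)
      have : x ^ α ≤ x ^ (-1-α) :=
        Real.rpow_le_rpow_of_exponent_ge hx0 hx1 (by linarith)
      rw [one_mul, min_eq_left this]
      exact hnear x hx0 hcase
    · have hMx : M ≤ x := le_trans hδM.le hcase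
      have hx1 : (1:ℝ) ≤ x := hM1.trans hMx
      have : x ^ (-1-α) ≤ x ^ α :=
        Real.rpow_le_rpow_of_exponent_le hx1 (by linarith)
      rw [one_mul, min_eq_right this]
      exact hfar x hMx


/-- the operator `A f = -x f' - f/2`. -/
noncomputable def opA (f : ℝ → ℝ) : ℝ → ℝ := fun x => -x * deriv f x - (1/2) * f x

/-- the class of admissible functions. -/
structure Good (α : ℝ) (f : ℝ → ℝ) : Prop where
  smooth : ContDiffOn ℝ ∞ f (Ioi 0)
  lim0 : ∀ k : ℕ, Tendsto (fun x : ℝ => x ^ ((k : ℝ) - α) * iteratedDeriv k f x)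
    (nhdsWithin 0 (Ioi 0)) (nhds 0)
  liminf : ∀ k : ℕ, Tendsto (fun x : ℝ => x ^ ((k : ℝ) + 1 + α) * iteratedDeriv k f x)
    atTop (nhds 0)

lemma deriv_congr_Ioi {f₁ f₂ : ℝ → ℝ} (h : EqOn f₁ f₂ (Ioi (0:ℝ))) {x : ℝ}
    (hx : x ∈ Ioi (0:ℝ)) : deriv f₁ x = deriv f₂ x :=
  Filter.EventuallyEq.deriv_eq (Filter.eventuallyEq_of_mem (Ioi_mem_nhds hx) h)

lemma contDiffOn_iteratedDeriv {f : ℝ → ℝ} (hf : ContDiffOn ℝ ∞ f (Ioi 0)) :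
    ∀ k : ℕ, ContDiffOn ℝ ∞ (iteratedDeriv k f) (Ioi 0) := by
  intro k
  induction k with
  | zero => simpa [iteratedDeriv_zero] using hf
  | succ n ih =>
    rw [iteratedDeriv_succ]
    exact ((contDiffOn_infty_iff_deriv_of_isOpen isOpen_Ioi).1 ih).2

lemma hasDerivAt_iteratedDeriv {f : ℝ → ℝ} (hf : ContDiffOn ℝ ∞ f (Ioi 0)) (k : ℕ)
    {x : ℝ} (hx : x ∈ Ioi (0:ℝ)) :
    HasDerivAt (iteratedDeriv k f) (iteratedDeriv (k+1) f x) x := by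
  have h1 : DifferentiableAt ℝ (iteratedDeriv k f) x :=
    ((contDiffOn_iteratedDeriv hf k).differentiableOn (by simp)).differentiableAt
      (Ioi_mem_nhds hx)
  have h2 : iteratedDeriv (k+1) f x = deriv (iteratedDeriv k f) x := by
    rw [iteratedDeriv_succ]
  rw [h2]
  exact h1.hasDerivAt

lemma iteratedDeriv_opA {f : ℝ → ℝ} (hf : ContDiffOn ℝ ∞ f (Ioi 0)) (k : ℕ) :
    ∀ x ∈ Ioi (0:ℝ), iteratedDeriv k (opA f) x =
      -x * iteratedDeriv (k+1) f x - ((k : ℝ) + 1/2) * iteratedDeriv k f x := by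
  induction k with
  | zero =>
    intro x hx
    norm_num [iteratedDeriv_zero, iteratedDeriv_one, opA]
  | succ n ih =>
    intro x hx
    have heq : EqOn (iteratedDeriv n (opA f))
        (fun y => -y * iteratedDeriv (n+1) f y - ((n : ℝ) + 1/2) * iteratedDeriv n f y)
        (Ioi (0:ℝ)) := fun y hy => ih y hy
    rw [iteratedDeriv_succ, deriv_congr_Ioi heq hx]
    have h1 : HasDerivAt (iteratedDeriv (n+1) f) (iteratedDeriv (n+2) f x) x :=
      hasDerivAt_iteratedDeriv hf (n+1) hx
    have h2 : HasDerivAt (iteratedDeriv n f) (iteratedDeriv (n+1) f x) x :=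
      hasDerivAt_iteratedDeriv hf n hx
    have h3 : HasDerivAt
        (fun y => -y * iteratedDeriv (n+1) f y - ((n : ℝ) + 1/2) * iteratedDeriv n f y)
        ((-1) * iteratedDeriv (n+1) f x + (-x) * iteratedDeriv (n+2) f x
          - ((n : ℝ) + 1/2) * iteratedDeriv (n+1) f x) x := by
      exact (((hasDerivAt_id x).neg.mul h1).sub (h2.const_mul _))
    rw [h3.deriv]
    push_cast
    ring

lemma Good.opA_good {α : ℝ} {f : ℝ → ℝ} (hf : Good α f) : Good α (opA f) := by
  have hsm : ContDiffOn ℝ ∞ f (Ioi 0) := hf.smooth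
  have hder : ContDiffOn ℝ ∞ (deriv f) (Ioi 0) :=
    ((contDiffOn_infty_iff_deriv_of_isOpen isOpen_Ioi).1 hsm).2
  constructor
  · exact (((contDiffOn_id (s := Ioi (0:ℝ))).neg.mul hder).sub (contDiffOn_const.mul hsm))
  · intro k
    have heq : ∀ᶠ x in nhdsWithin (0:ℝ) (Ioi 0),
        x ^ ((k:ℝ) - α) * iteratedDeriv k (opA f) x =
        -(x ^ (((k:ℝ)+1) - α) * iteratedDeriv (k+1) f x)
          - ((k:ℝ) + 1/2) * (x ^ ((k:ℝ) - α) * iteratedDeriv k f x) := by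
      filter_upwards [self_mem_nhdsWithin] with x hx
      have hx0 : (0:ℝ) < x := hx
      rw [iteratedDeriv_opA hsm k x hx]
      have hpow : x ^ (((k:ℝ)+1) - α) = x ^ ((k:ℝ) - α) * x := by
        rw [show ((k:ℝ)+1) - α = ((k:ℝ) - α) + 1 by ring, Real.rpow_add_one (ne_of_gt hx0)]
      rw [hpow]; ring
    have hlim : Tendsto (fun x : ℝ =>
        -(x ^ (((k:ℝ)+1) - α) * iteratedDeriv (k+1) f x)
          - ((k:ℝ) + 1/2) * (x ^ ((k:ℝ) - α) * iteratedDeriv k f x))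
        (nhdsWithin 0 (Ioi 0)) (nhds 0) := by
      have hA := hf.lim0 (k+1)
      have hB := hf.lim0 k
      have hA' : Tendsto (fun x : ℝ => x ^ (((k:ℝ)+1) - α) * iteratedDeriv (k+1) f x)
          (nhdsWithin 0 (Ioi 0)) (nhds 0) := by
        convert hA using 2 with x
        push_cast; ring_nf
      have := (hA'.neg).sub (hB.const_mul ((k:ℝ) + 1/2))
      simpa using this
    exact Tendsto.congr' (Filter.EventuallyEq.symm heq) hlim
  · intro k
    have heq : ∀ᶠ x in (atTop : Filter ℝ),
        x ^ ((k:ℝ) + 1 + α) * iteratedDeriv k (opA f) x =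
        -(x ^ (((k:ℝ)+1) + 1 + α) * iteratedDeriv (k+1) f x)
          - ((k:ℝ) + 1/2) * (x ^ ((k:ℝ) + 1 + α) * iteratedDeriv k f x) := by
      filter_upwards [eventually_gt_atTop (0:ℝ)] with x hx0
      rw [iteratedDeriv_opA hsm k x hx0]
      have hpow : x ^ (((k:ℝ)+1) + 1 + α) = x ^ ((k:ℝ) + 1 + α) * x := by
        rw [show ((k:ℝ)+1) + 1 + α = ((k:ℝ) + 1 + α) + 1 by ring,
          Real.rpow_add_one (ne_of_gt hx0)]
      rw [hpow]; ring
    have hlim : Tendsto (fun x : ℝ =>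
        -(x ^ (((k:ℝ)+1) + 1 + α) * iteratedDeriv (k+1) f x)
          - ((k:ℝ) + 1/2) * (x ^ ((k:ℝ) + 1 + α) * iteratedDeriv k f x))
        atTop (nhds 0) := by
      have hA := hf.liminf (k+1)
      have hB := hf.liminf k
      have hA' : Tendsto (fun x : ℝ => x ^ (((k:ℝ)+1) + 1 + α) * iteratedDeriv (k+1) f x)
          atTop (nhds 0) := by
        convert hA using 2 with x
        push_cast; ring_nf
      have := (hA'.neg).sub (hB.const_mul ((k:ℝ) + 1/2))
      simpa using this
    exact Tendsto.congr' (Filter.EventuallyEq.symm heq) hlim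

/-- bound for a Good function itself. -/
lemma Good.bound {α : ℝ} (hα : 0 < α) {f : ℝ → ℝ} (hf : Good α f) :
    ∃ C : ℝ, 0 ≤ C ∧ ∀ x ∈ Ioi (0:ℝ), |f x| ≤ C * min (x ^ α) (x ^ (-1 - α)) := by
  apply exists_MB hα (hf.smooth.continuousOn)
  · have := hf.lim0 0
    simpa [iteratedDeriv_zero] using this
  · have := hf.liminf 0
    simpa [iteratedDeriv_zero] using this


/-- substitution `x = t u`. -/
lemma mulConv_eq (f : ℝ → ℝ) {t : ℝ} (ht : 0 < t) :
    mulConvFract f t = ∫ u in Ioi (0:ℝ), Int.fract u * f (t*u) / u := by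
  have key := integral_comp_mul_left_Ioi (fun x => Int.fract (x / t) * f x / x) 0 ht
  rw [mul_zero] at key
  calc mulConvFract f t
      = t * (t⁻¹ * ∫ x in Ioi (0:ℝ), Int.fract (x / t) * f x / x) := by
        rw [mulConvFract]; field_simp
    _ = t * ∫ x in Ioi (0:ℝ), Int.fract ((t*x) / t) * f (t*x) / (t*x) := by
        rw [key, smul_eq_mul]
    _ = ∫ u in Ioi (0:ℝ), t * (Int.fract ((t*u) / t) * f (t*u) / (t*u)) := by
        rw [MeasureTheory.integral_const_mul]
    _ = ∫ u in Ioi (0:ℝ), Int.fract u * f (t*u) / u := by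
        refine setIntegral_congr_fun measurableSet_Ioi fun u hu => ?_
        have hu0 : (0:ℝ) < u := hu
        rw [mul_div_cancel_left₀ u (ne_of_gt ht)]
        field_simp

lemma integrand_aesm {f : ℝ → ℝ} (hfc : ContinuousOn f (Ioi 0)) {t : ℝ} (ht : 0 < t) :
    AEStronglyMeasurable (fun u : ℝ => Int.fract u * f (t*u) / u)
      (volume.restrict (Ioi (0:ℝ))) := by
  have h1 : AEStronglyMeasurable (fun u : ℝ => Int.fract u) (volume.restrict (Ioi (0:ℝ))) :=
    measurable_fract.aestronglyMeasurable
  have h2 : AEStronglyMeasurable (fun u : ℝ => f (t*u) / u) (volume.restrict (Ioi (0:ℝ))) := by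
    apply ContinuousOn.aestronglyMeasurable _ measurableSet_Ioi
    apply ContinuousOn.div
    · exact hfc.comp (continuous_const.mul continuous_id).continuousOn
        (fun u hu => mul_pos ht hu)
    · exact continuousOn_id
    · exact fun u hu => ne_of_gt hu
  exact (h1.mul h2).congr
    (Filter.Eventually.of_forall (fun u => (mul_div_assoc _ _ _).symm))

lemma integrand_integrable {α : ℝ} (hα : 0 < α) {f : ℝ → ℝ}
    (hfc : ContinuousOn f (Ioi 0)) {C : ℝ} (hC : 0 ≤ C)
    (hMB : ∀ x ∈ Ioi (0:ℝ), |f x| ≤ C * min (x ^ α) (x ^ (-1 - α)))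
    {t : ℝ} (ht : 0 < t) :
    IntegrableOn (fun u => Int.fract u * f (t*u) / u) (Ioi (0:ℝ)) := by
  refine integrableOn_of_le_min (C := C * (t ^ α + t ^ (-1-α)))
    (a := α - 1) (b := -2 - α) (by linarith) (by linarith) (integrand_aesm hfc ht) ?_
  intro x hx
  have hx0 : (0:ℝ) < x := hx
  have htx : (0:ℝ) < t * x := mul_pos ht hx0
  have habs : |Int.fract x * f (t*x) / x| = Int.fract x * |f (t*x)| / x := by
    rw [abs_div, abs_mul, abs_of_nonneg (Int.fract_nonneg x), abs_of_pos hx0]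
  have hfb := hMB (t*x) htx
  have htα : (0:ℝ) ≤ t ^ α := Real.rpow_nonneg ht.le _
  have htα' : (0:ℝ) ≤ t ^ (-1-α) := Real.rpow_nonneg ht.le _
  rcases le_or_gt x 1 with hx1 | hx1
  · -- use the (t x)^α branch
    have hmin : min ((t*x) ^ α) ((t*x) ^ (-1-α)) ≤ (t*x) ^ α := min_le_left _ _
    have hnum : Int.fract x * |f (t*x)| ≤ C * (t ^ α * x ^ α) := by
      calc Int.fract x * |f (t*x)| ≤ 1 * (C * ((t*x) ^ α)) := by
            apply mul_le_mul (Int.fract_lt_one x).le (hfb.trans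
              (mul_le_mul_of_nonneg_left hmin hC)) (by positivity) one_pos.le
        _ = C * (t ^ α * x ^ α) := by rw [one_mul, Real.mul_rpow ht.le hx0.le]
    have hminx : min (x ^ (α-1)) (x ^ (-2-α)) = x ^ (α-1) :=
      min_eq_left (Real.rpow_le_rpow_of_exponent_ge hx0 hx1 (by linarith))
    rw [habs, show (-2 - α : ℝ) = -2-α by ring, hminx]
    calc Int.fract x * |f (t*x)| / x ≤ C * (t ^ α * x ^ α) / x := by
          rw [div_eq_mul_inv, div_eq_mul_inv]
          exact mul_le_mul_of_nonneg_right hnum (inv_nonneg.2 hx0.le)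
      _ = C * t ^ α * x ^ (α-1) := by
          rw [show (α-1 : ℝ) = α + (-1) by ring, Real.rpow_add hx0, Real.rpow_neg_one]; ring
      _ ≤ C * (t ^ α + t ^ (-1-α)) * x ^ (α-1) := by
          apply mul_le_mul_of_nonneg_right _ (Real.rpow_nonneg hx0.le _)
          apply mul_le_mul_of_nonneg_left _ hC
          linarith
  · -- use the (t x)^(-1-α) branch
    have hx1' : (1:ℝ) ≤ x := hx1.le
    have hmin : min ((t*x) ^ α) ((t*x) ^ (-1-α)) ≤ (t*x) ^ (-1-α) := min_le_right _ _
    have hnum : Int.fract x * |f (t*x)| ≤ C * (t ^ (-1-α) * x ^ (-1-α)) := by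
      calc Int.fract x * |f (t*x)| ≤ 1 * (C * ((t*x) ^ (-1-α))) := by
            apply mul_le_mul (Int.fract_lt_one x).le (hfb.trans
              (mul_le_mul_of_nonneg_left hmin hC)) (by positivity) one_pos.le
        _ = C * (t ^ (-1-α) * x ^ (-1-α)) := by rw [one_mul, Real.mul_rpow ht.le hx0.le]
    have hminx : min (x ^ (α-1)) (x ^ (-2-α)) = x ^ (-2-α) :=
      min_eq_right (Real.rpow_le_rpow_of_exponent_le hx1' (by linarith))
    rw [habs, show (-2 - α : ℝ) = -2-α by ring, hminx]
    calc Int.fract x * |f (t*x)| / x ≤ C * (t ^ (-1-α) * x ^ (-1-α)) / x := by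
          rw [div_eq_mul_inv, div_eq_mul_inv]
          exact mul_le_mul_of_nonneg_right hnum (inv_nonneg.2 hx0.le)
      _ = C * t ^ (-1-α) * x ^ (-2-α) := by
          rw [show (-2-α : ℝ) = (-1-α) + (-1) by ring, Real.rpow_add hx0, Real.rpow_neg_one]
          ring
      _ ≤ C * (t ^ α + t ^ (-1-α)) * x ^ (-2-α) := by
          apply mul_le_mul_of_nonneg_right _ (Real.rpow_nonneg hx0.le _)
          apply mul_le_mul_of_nonneg_left _ hC
          linarith


lemma fract_le_of_nonneg {y : ℝ} (hy : 0 ≤ y) : Int.fract y ≤ y := by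
  have h : (0:ℝ) ≤ (⌊y⌋ : ℝ) := by exact_mod_cast Int.floor_nonneg.mpr hy
  have := Int.self_sub_floor y
  linarith

lemma mulConv_aesm {f : ℝ → ℝ} (hfc : ContinuousOn f (Ioi 0)) {t : ℝ} :
    AEStronglyMeasurable (fun x : ℝ => Int.fract (x/t) * f x / x)
      (volume.restrict (Ioi (0:ℝ))) := by
  have h1 : AEStronglyMeasurable (fun x : ℝ => Int.fract (x/t)) (volume.restrict (Ioi (0:ℝ))) :=
    (measurable_fract.comp (measurable_id.div_const t)).aestronglyMeasurable
  have h2 : AEStronglyMeasurable (fun x : ℝ => f x / x) (volume.restrict (Ioi (0:ℝ))) := by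
    apply ContinuousOn.aestronglyMeasurable _ measurableSet_Ioi
    exact ContinuousOn.div hfc continuousOn_id (fun x hx => ne_of_gt hx)
  exact (h1.mul h2).congr
    (Filter.Eventually.of_forall (fun u => (mul_div_assoc _ _ _).symm))

lemma mulConv_bound {α : ℝ} (hα : 0 < α) {f : ℝ → ℝ} (hfc : ContinuousOn f (Ioi 0))
    {C : ℝ} (hC : 0 ≤ C)
    (hMB : ∀ x ∈ Ioi (0:ℝ), |f x| ≤ C * min (x ^ α) (x ^ (-1 - α))) :
    ∃ D : ℝ, 0 ≤ D ∧ ∀ t ∈ Ioi (0:ℝ), |mulConvFract f t| ≤ D * min 1 t⁻¹ := by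
  set J : ℝ := ∫ u in Ioi (0:ℝ), min (u ^ (α-1)) (u ^ (-2-α)) with hJdef
  set J' : ℝ := ∫ u in Ioi (0:ℝ), min (u ^ α) (u ^ (-1-α)) with hJ'def
  have hJ : 0 ≤ J := setIntegral_nonneg measurableSet_Ioi (fun x hx =>
    le_min (Real.rpow_nonneg (le_of_lt hx) _) (Real.rpow_nonneg (le_of_lt hx) _))
  have hJ' : 0 ≤ J' := setIntegral_nonneg measurableSet_Ioi (fun x hx =>
    le_min (Real.rpow_nonneg (le_of_lt hx) _) (Real.rpow_nonneg (le_of_lt hx) _))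
  refine ⟨C * (J + J'), by positivity, ?_⟩
  intro t ht
  have ht0 : (0:ℝ) < t := ht
  -- pointwise rewriting of the minimum divided by x
  have hmindiv : ∀ x : ℝ, 0 < x →
      min (x ^ α) (x ^ (-1-α)) / x = min (x ^ (α-1)) (x ^ (-2-α)) := by
    intro x hx0
    rw [← min_div_div_right hx0.le]
    congr 1
    · rw [show (α-1 : ℝ) = α + (-1) by ring, Real.rpow_add hx0, Real.rpow_neg_one,
        div_eq_mul_inv]
    · rw [show (-2-α : ℝ) = (-1-α) + (-1) by ring, Real.rpow_add hx0, Real.rpow_neg_one,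
        div_eq_mul_inv]
  have claim1 : |mulConvFract f t| ≤ C * J := by
    rw [← Real.norm_eq_abs, mulConvFract]
    have hb := norm_integral_le_of_norm_le
      (f := fun x : ℝ => Int.fract (x/t) * f x / x)
      (g := fun x : ℝ => C * min (x ^ (α-1)) (x ^ (-2-α)))
      ((integrableOn_min_rpow (by linarith) (by linarith)).const_mul C) ?_
    · calc ‖∫ x in Ioi (0:ℝ), Int.fract (x/t) * f x / x‖
          ≤ ∫ x in Ioi (0:ℝ), C * min (x ^ (α-1)) (x ^ (-2-α)) := hb
        _ = C * J := by rw [hJdef, MeasureTheory.integral_const_mul]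
    · filter_upwards [ae_restrict_mem measurableSet_Ioi] with x hx
      have hx0 : (0:ℝ) < x := hx
      have habs : ‖Int.fract (x/t) * f x / x‖ = Int.fract (x/t) * |f x| / x := by
        rw [Real.norm_eq_abs, abs_div, abs_mul, abs_of_nonneg (Int.fract_nonneg _),
          abs_of_pos hx0]
      rw [habs, ← hmindiv x hx0]
      calc Int.fract (x/t) * |f x| / x ≤ 1 * (C * min (x ^ α) (x ^ (-1-α))) / x := by
            rw [div_eq_mul_inv, div_eq_mul_inv]
            apply mul_le_mul_of_nonneg_right _ (inv_nonneg.2 hx0.le)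
            exact mul_le_mul (Int.fract_lt_one _).le
              (by simpa using hMB x hx) (abs_nonneg _) one_pos.le
        _ = C * (min (x ^ α) (x ^ (-1-α)) / x) := by rw [one_mul, mul_div_assoc]
  have claim2 : |mulConvFract f t| ≤ C * J' * t⁻¹ := by
    rw [← Real.norm_eq_abs, mulConvFract]
    have hb := norm_integral_le_of_norm_le
      (f := fun x : ℝ => Int.fract (x/t) * f x / x)
      (g := fun x : ℝ => C * t⁻¹ * min (x ^ α) (x ^ (-1-α)))
      ((integrableOn_min_rpow (by linarith) (by linarith)).const_mul (C * t⁻¹)) ?_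
    · calc ‖∫ x in Ioi (0:ℝ), Int.fract (x/t) * f x / x‖
          ≤ ∫ x in Ioi (0:ℝ), C * t⁻¹ * min (x ^ α) (x ^ (-1-α)) := hb
        _ = C * J' * t⁻¹ := by rw [hJ'def, MeasureTheory.integral_const_mul]; ring
    · filter_upwards [ae_restrict_mem measurableSet_Ioi] with x hx
      have hx0 : (0:ℝ) < x := hx
      have habs : ‖Int.fract (x/t) * f x / x‖ = Int.fract (x/t) * |f x| / x := by
        rw [Real.norm_eq_abs, abs_div, abs_mul, abs_of_nonneg (Int.fract_nonneg _),
          abs_of_pos hx0]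
      rw [habs]
      have hfr : Int.fract (x/t) ≤ x / t := fract_le_of_nonneg (by positivity)
      calc Int.fract (x/t) * |f x| / x ≤ (x/t) * (C * min (x ^ α) (x ^ (-1-α))) / x := by
            rw [div_eq_mul_inv, div_eq_mul_inv]
            apply mul_le_mul_of_nonneg_right _ (inv_nonneg.2 hx0.le)
            exact mul_le_mul hfr (hMB x hx) (abs_nonneg _) (by positivity)
        _ = C * t⁻¹ * min (x ^ α) (x ^ (-1-α)) := by
            field_simp
  rcases le_total t 1 with hle | hle
  · have h1t : (1:ℝ) ≤ t⁻¹ := by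
      have := mul_le_mul_of_nonneg_right hle (inv_nonneg.2 ht0.le)
      rwa [mul_inv_cancel₀ (ne_of_gt ht0), one_mul] at this
    rw [min_eq_left h1t, mul_one]
    have : C * J ≤ C * (J + J') := by nlinarith
    linarith
  · have h1t : t⁻¹ ≤ 1 := inv_le_one_of_one_le₀ hle
    rw [min_eq_right h1t]
    have : C * J' * t⁻¹ ≤ C * (J + J') * t⁻¹ := by
      apply mul_le_mul_of_nonneg_right _ (inv_nonneg.2 ht0.le)
      nlinarith
    linarith


lemma mulConv_hasDeriv {α : ℝ} (hα : 0 < α) {f : ℝ → ℝ}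
    (hsm : ContDiffOn ℝ ∞ f (Ioi 0)) {Cf CA : ℝ} (hCf : 0 ≤ Cf) (hCA : 0 ≤ CA)
    (hf : ∀ x ∈ Ioi (0:ℝ), |f x| ≤ Cf * min (x ^ α) (x ^ (-1-α)))
    (hA : ∀ x ∈ Ioi (0:ℝ), |opA f x| ≤ CA * min (x ^ α) (x ^ (-1-α)))
    {t₀ : ℝ} (ht₀ : 0 < t₀) :
    HasDerivAt (mulConvFract f) (∫ u in Ioi (0:ℝ), Int.fract u * deriv f (t₀*u)) t₀ ∧
    IntegrableOn (fun u => Int.fract u * deriv f (t₀*u)) (Ioi (0:ℝ)) := by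
  have hfc : ContinuousOn f (Ioi 0) := hsm.continuousOn
  have hdc : ContinuousOn (deriv f) (Ioi 0) :=
    hsm.continuousOn_deriv_of_isOpen isOpen_Ioi (by exact_mod_cast le_top)
  set C₂ : ℝ := CA + Cf/2 with hC₂def
  have hC₂ : 0 ≤ C₂ := by positivity
  -- bound |x * deriv f x| ≤ C₂ * min ..
  have hxd : ∀ x ∈ Ioi (0:ℝ), |x * deriv f x| ≤ C₂ * min (x ^ α) (x ^ (-1-α)) := by
    intro x hx
    have h1 := hA x hx
    have h2 := hf x hx
    have : x * deriv f x = -(opA f x) - (1/2) * f x := by rw [opA]; ring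
    rw [this]
    calc |-(opA f x) - (1/2) * f x| ≤ |opA f x| + (1/2) * |f x| := by
          rw [sub_eq_add_neg]
          refine le_trans (abs_add_le _ _) ?_
          rw [abs_neg, abs_neg, abs_mul, show |(1/2:ℝ)| = 1/2 by norm_num]
      _ ≤ CA * min (x ^ α) (x ^ (-1-α)) + (1/2) * (Cf * min (x ^ α) (x ^ (-1-α))) := by
          have := mul_le_mul_of_nonneg_left h2 (by norm_num : (0:ℝ) ≤ 1/2)
          linarith
      _ = C₂ * min (x ^ α) (x ^ (-1-α)) := by rw [hC₂def]; ring
  set K : ℝ := C₂ * (2/t₀) * ((2*t₀) ^ α + (t₀/2) ^ (-1-α)) with hKdef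
  have hK : 0 ≤ K := by positivity
  set bound : ℝ → ℝ := fun u => K * min (u ^ (α-1)) (u ^ (-2-α)) with hbdef
  have hbound_int : Integrable bound (volume.restrict (Ioi (0:ℝ))) :=
    (integrableOn_min_rpow (by linarith) (by linarith)).const_mul K
  -- the main dominated-derivative argument
  have main := hasDerivAt_integral_of_dominated_loc_of_deriv_le
    (F := fun t u => Int.fract u * f (t*u) / u)
    (F' := fun t u => Int.fract u * deriv f (t*u))
    (μ := volume.restrict (Ioi (0:ℝ))) (x₀ := t₀)
    (bound := bound) (Metric.ball_mem_nhds t₀ (half_pos ht₀)) ?_ ?_ ?_ ?_ hbound_int ?_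
  · obtain ⟨hint, hder⟩ := main
    constructor
    · apply hder.congr_of_eventuallyEq
      filter_upwards [Ioi_mem_nhds ht₀] with t ht
      exact mulConv_eq f ht
    · exact hint
  · -- measurability of F t for t near t₀
    filter_upwards [Ioi_mem_nhds ht₀] with t ht
    exact integrand_aesm hfc ht
  · exact integrand_integrable hα hfc hCf hf ht₀
  · -- measurability of F' t₀
    have h1 : AEStronglyMeasurable (fun u : ℝ => Int.fract u)
        (volume.restrict (Ioi (0:ℝ))) := measurable_fract.aestronglyMeasurable
    have h2 : AEStronglyMeasurable (fun u : ℝ => deriv f (t₀*u))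
        (volume.restrict (Ioi (0:ℝ))) := by
      apply ContinuousOn.aestronglyMeasurable _ measurableSet_Ioi
      exact hdc.comp (continuous_const.mul continuous_id).continuousOn
        (fun u hu => mul_pos ht₀ hu)
    exact h1.mul h2
  · -- the uniform bound on F'
    filter_upwards [ae_restrict_mem measurableSet_Ioi] with u hu
    intro t htball
    have hu0 : (0:ℝ) < u := hu
    rw [Metric.mem_ball, Real.dist_eq] at htball
    have hb2 := abs_lt.1 htball
    have htl : t₀/2 < t := by linarith [hb2.1]
    have ht0 : (0:ℝ) < t := lt_trans (half_pos ht₀) htl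
    have htr : t < 2*t₀ := by linarith [hb2.2]
    have htu : (0:ℝ) < t * u := mul_pos ht0 hu0
    have hd := hxd (t*u) htu
    have hdabs : |deriv f (t*u)| ≤ C₂ * min ((t*u) ^ α) ((t*u) ^ (-1-α)) / (t*u) := by
      rw [le_div_iff₀ htu]
      calc |deriv f (t*u)| * (t*u) = |(t*u) * deriv f (t*u)| := by
            rw [abs_mul, abs_of_pos htu]; ring
        _ ≤ C₂ * min ((t*u) ^ α) ((t*u) ^ (-1-α)) := hd
    have hF'le : ‖Int.fract u * deriv f (t*u)‖ ≤ |deriv f (t*u)| := by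
      rw [Real.norm_eq_abs, abs_mul, abs_of_nonneg (Int.fract_nonneg u)]
      calc Int.fract u * |deriv f (t*u)| ≤ 1 * |deriv f (t*u)| :=
            mul_le_mul_of_nonneg_right (Int.fract_lt_one u).le (abs_nonneg _)
        _ = |deriv f (t*u)| := one_mul _
    refine le_trans hF'le (le_trans hdabs ?_)
    have htinv : (t*u)⁻¹ ≤ (2/t₀) * u⁻¹ := by
      rw [mul_inv]
      apply mul_le_mul_of_nonneg_right _ (inv_nonneg.2 hu0.le)
      rw [show (2/t₀ : ℝ) = (t₀/2)⁻¹ by field_simp]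
      exact inv_anti₀ (half_pos ht₀) htl.le
    rcases le_total u 1 with hu1 | hu1
    · -- small u
      have hminx : min (u ^ (α-1)) (u ^ (-2-α)) = u ^ (α-1) :=
        min_eq_left (Real.rpow_le_rpow_of_exponent_ge hu0 hu1 (by linarith))
      have hch : min ((t*u) ^ α) ((t*u) ^ (-1-α)) ≤ (2*t₀) ^ α * u ^ α := by
        refine le_trans (min_le_left _ _) ?_
        rw [Real.mul_rpow ht0.le hu0.le]
        apply mul_le_mul_of_nonneg_right _ (Real.rpow_nonneg hu0.le _)
        exact Real.rpow_le_rpow ht0.le htr.le hα.le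
      calc C₂ * min ((t*u) ^ α) ((t*u) ^ (-1-α)) / (t*u)
          = C₂ * min ((t*u) ^ α) ((t*u) ^ (-1-α)) * (t*u)⁻¹ := by
            rw [div_eq_mul_inv]
        _ ≤ C₂ * ((2*t₀) ^ α * u ^ α) * ((2/t₀) * u⁻¹) := by
            apply mul_le_mul (mul_le_mul_of_nonneg_left hch hC₂) htinv
              (inv_nonneg.2 htu.le) (by positivity)
        _ = C₂ * (2/t₀) * (2*t₀) ^ α * (u ^ α * u⁻¹) := by ring
        _ = C₂ * (2/t₀) * (2*t₀) ^ α * u ^ (α-1) := by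
            rw [show (α-1 : ℝ) = α + (-1) by ring, Real.rpow_add hu0, Real.rpow_neg_one]
        _ ≤ K * u ^ (α-1) := by
            apply mul_le_mul_of_nonneg_right _ (Real.rpow_nonneg hu0.le _)
            rw [hKdef]
            have h1 : (0:ℝ) ≤ (t₀/2) ^ (-1-α) := Real.rpow_nonneg (by positivity) _
            nlinarith [Real.rpow_nonneg (by positivity : (0:ℝ) ≤ 2*t₀) α,
              mul_nonneg hC₂ (by positivity : (0:ℝ) ≤ 2/t₀)]
        _ = bound u := by rw [hbdef]; simp only []; rw [hminx]
    · -- large u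
      have hminx : min (u ^ (α-1)) (u ^ (-2-α)) = u ^ (-2-α) :=
        min_eq_right (Real.rpow_le_rpow_of_exponent_le hu1 (by linarith))
      have hch : min ((t*u) ^ α) ((t*u) ^ (-1-α)) ≤ (t₀/2) ^ (-1-α) * u ^ (-1-α) := by
        refine le_trans (min_le_right _ _) ?_
        rw [Real.mul_rpow ht0.le hu0.le]
        apply mul_le_mul_of_nonneg_right _ (Real.rpow_nonneg hu0.le _)
        exact Real.rpow_le_rpow_of_nonpos (half_pos ht₀) htl.le (by linarith)
      calc C₂ * min ((t*u) ^ α) ((t*u) ^ (-1-α)) / (t*u)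
          = C₂ * min ((t*u) ^ α) ((t*u) ^ (-1-α)) * (t*u)⁻¹ := by
            rw [div_eq_mul_inv]
        _ ≤ C₂ * ((t₀/2) ^ (-1-α) * u ^ (-1-α)) * ((2/t₀) * u⁻¹) := by
            apply mul_le_mul (mul_le_mul_of_nonneg_left hch hC₂) htinv
              (inv_nonneg.2 htu.le) (by positivity)
        _ = C₂ * (2/t₀) * (t₀/2) ^ (-1-α) * (u ^ (-1-α) * u⁻¹) := by ring
        _ = C₂ * (2/t₀) * (t₀/2) ^ (-1-α) * u ^ (-2-α) := by
            rw [show (-2-α : ℝ) = (-1-α) + (-1) by ring, Real.rpow_add hu0,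
              Real.rpow_neg_one]
        _ ≤ K * u ^ (-2-α) := by
            apply mul_le_mul_of_nonneg_right _ (Real.rpow_nonneg hu0.le _)
            rw [hKdef]
            have h1 : (0:ℝ) ≤ (2*t₀) ^ α := Real.rpow_nonneg (by positivity) _
            nlinarith [Real.rpow_nonneg (by positivity : (0:ℝ) ≤ t₀/2) (-1-α),
              mul_nonneg hC₂ (by positivity : (0:ℝ) ≤ 2/t₀)]
        _ = bound u := by rw [hbdef]; simp only []; rw [hminx]
  · -- differentiability in t for each u
    filter_upwards [ae_restrict_mem measurableSet_Ioi] with u hu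
    intro t htball
    have hu0 : (0:ℝ) < u := hu
    rw [Metric.mem_ball, Real.dist_eq] at htball
    have hb2 := abs_lt.1 htball
    have ht0 : (0:ℝ) < t := by linarith [hb2.1]
    have htu : (0:ℝ) < t * u := mul_pos ht0 hu0
    have hfd : HasDerivAt f (deriv f (t*u)) (t*u) :=
      (((hsm.differentiableOn (by simp)).differentiableAt
        (Ioi_mem_nhds htu))).hasDerivAt
    have h1 : HasDerivAt (fun s : ℝ => f (s*u)) (deriv f (t*u) * u) t :=
      HasDerivAt.comp t hfd (hasDerivAt_mul_const u)
    have h2 := h1.const_mul (Int.fract u / u)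
    have heq : (fun s : ℝ => Int.fract u * f (s*u) / u)
        = (fun s : ℝ => Int.fract u / u * f (s*u)) := by
      funext s; ring
    have hval : Int.fract u * deriv f (t*u) = Int.fract u / u * (deriv f (t*u) * u) := by
      field_simp
    rw [heq, hval]
    exact h2


lemma mulConv_opA {α : ℝ} (hα : 0 < α) {f : ℝ → ℝ}
    (hsm : ContDiffOn ℝ ∞ f (Ioi 0)) {Cf CA : ℝ} (hCf : 0 ≤ Cf) (hCA : 0 ≤ CA)
    (hf : ∀ x ∈ Ioi (0:ℝ), |f x| ≤ Cf * min (x ^ α) (x ^ (-1-α)))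
    (hA : ∀ x ∈ Ioi (0:ℝ), |opA f x| ≤ CA * min (x ^ α) (x ^ (-1-α)))
    {t : ℝ} (ht : 0 < t) :
    mulConvFract (opA f) t = -t * deriv (mulConvFract f) t - (1/2) * mulConvFract f t := by
  obtain ⟨hD, hInt⟩ := mulConv_hasDeriv hα hsm hCf hCA hf hA ht
  have hfc := hsm.continuousOn
  have hd : deriv (mulConvFract f) t = ∫ u in Ioi (0:ℝ), Int.fract u * deriv f (t*u) :=
    hD.deriv
  rw [mulConv_eq (opA f) ht, hd, mulConv_eq f ht]
  have hint2 : IntegrableOn (fun u => Int.fract u * f (t*u) / u) (Ioi (0:ℝ)) :=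
    integrand_integrable hα hfc hCf hf ht
  rw [← MeasureTheory.integral_const_mul, ← MeasureTheory.integral_const_mul,
    ← integral_sub (hInt.const_mul (-t)) (hint2.const_mul (1/2))]
  refine setIntegral_congr_fun measurableSet_Ioi fun u hu => ?_
  have hu0 : (0:ℝ) < u := hu
  have hop : opA f (t*u) = -(t*u) * deriv f (t*u) - (1/2) * f (t*u) := rfl
  simp only [hop]
  field_simp


lemma prod_integrable {F H : ℝ → ℝ} {C D : ℝ}
    (hFc : ContinuousOn F (Ioi 0)) (hHc : ContinuousOn H (Ioi 0))
    (hC : 0 ≤ C) (hD : 0 ≤ D)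
    (hF : ∀ t ∈ Ioi (0:ℝ), |F t| ≤ C * min 1 t⁻¹)
    (hH : ∀ t ∈ Ioi (0:ℝ), |H t| ≤ D * min 1 t⁻¹) :
    IntegrableOn (fun t => F t * H t) (Ioi (0:ℝ)) := by
  refine integrableOn_of_le_min (C := C * D) (a := (0:ℝ)) (b := (-2:ℝ))
    (by norm_num) (by norm_num)
    ((hFc.mul hHc).aestronglyMeasurable measurableSet_Ioi) ?_
  intro t ht
  have ht0 : (0:ℝ) < t := ht
  have h1 := hF t ht
  have h2 := hH t ht
  have habs : |F t * H t| = |F t| * |H t| := abs_mul _ _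
  have hmm : 0 ≤ min 1 t⁻¹ := le_min one_pos.le (inv_nonneg.2 ht0.le)
  have key : |F t * H t| ≤ C * D * (min 1 t⁻¹ * min 1 t⁻¹) := by
    rw [habs]
    calc |F t| * |H t| ≤ (C * min 1 t⁻¹) * (D * min 1 t⁻¹) :=
          mul_le_mul h1 h2 (abs_nonneg _) (by positivity)
      _ = C * D * (min 1 t⁻¹ * min 1 t⁻¹) := by ring
  refine key.trans ?_
  apply mul_le_mul_of_nonneg_left _ (by positivity)
  have h0 : t ^ (0:ℝ) = 1 := Real.rpow_zero t
  have h2' : t ^ (-2:ℝ) = t⁻¹ * t⁻¹ := by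
    rw [show (-2:ℝ) = (-1) + (-1) by norm_num, Real.rpow_add ht0, Real.rpow_neg_one]
  rcases le_total t 1 with hle | hle
  · have h1t : (1:ℝ) ≤ t⁻¹ := by
      have := mul_le_mul_of_nonneg_right hle (inv_nonneg.2 ht0.le)
      rwa [mul_inv_cancel₀ (ne_of_gt ht0), one_mul] at this
    have hm1 : min (1:ℝ) t⁻¹ = 1 := min_eq_left h1t
    have hm2 : min (t ^ (0:ℝ)) (t ^ (-2:ℝ)) = 1 := by
      rw [h0]
      apply min_eq_left
      rw [h2']
      nlinarith
    rw [hm1, hm2]; norm_num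
  · have h1t : t⁻¹ ≤ 1 := inv_le_one_of_one_le₀ hle
    have hm1 : min (1:ℝ) t⁻¹ = t⁻¹ := min_eq_right h1t
    have hm2 : min (t ^ (0:ℝ)) (t ^ (-2:ℝ)) = t⁻¹ * t⁻¹ := by
      rw [h0, h2']
      apply min_eq_right
      nlinarith [inv_nonneg.2 ht0.le]
    rw [hm1, hm2]

end Stmt16

/-- for the recursive family with `r_k = 1/2`, i.e.
`g_{k+1}(x) = -x g_k'(x) - g_k(x)/2`, the Gram matrix
`G_{k,j} = ⟨g_k^×, g_j^×⟩` satisfies `G_{k,j} + G_{k+1,j-1} = 0` for `j ≥ 1`; in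
particular `G_{k,k+1} = 0`. -/
theorem stmt16 (α : ℝ) (hα : 0 < α) (g : ℕ → ℝ → ℝ)
    (hsmooth : ContDiffOn ℝ (⊤ : ℕ∞) (g 0) (Ioi 0))
    (hlim0 : ∀ k : ℕ, Tendsto (fun x : ℝ => x ^ ((k : ℝ) - α) * iteratedDeriv k (g 0) x)
      (nhdsWithin 0 (Ioi 0)) (nhds 0))
    (hliminf : ∀ k : ℕ,
      Tendsto (fun x : ℝ => x ^ ((k : ℝ) + 1 + α) * iteratedDeriv k (g 0) x)
      atTop (nhds 0))
    (hrec : ∀ k : ℕ, ∀ x ∈ Ioi (0 : ℝ),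
      g (k + 1) x = -x * deriv (g k) x - (1 / 2) * g k x)
    (G : ℕ → ℕ → ℝ)
    (hG : ∀ k j : ℕ,
      G k j = ∫ t in Ioi (0 : ℝ), mulConvFract (g k) t * mulConvFract (g j) t) :
    (∀ k j : ℕ, 1 ≤ j → G k j + G (k + 1) (j - 1) = 0) ∧
    (∀ k : ℕ, G k (k + 1) = 0) := by
  set hh : ℕ → ℝ → ℝ := fun k => Stmt16.opA^[k] (g 0) with hhdef
  have hhs : ∀ k, hh (k+1) = Stmt16.opA (hh k) := fun k => Function.iterate_succ_apply' _ k _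
  have hGood : ∀ k, Stmt16.Good α (hh k) := by
    intro k
    induction k with
    | zero => exact ⟨hsmooth.of_le (by simp), hlim0, hliminf⟩
    | succ n ih => rw [hhs n]; exact ih.opA_good
  have hEq : ∀ k, EqOn (g k) (hh k) (Ioi (0:ℝ)) := by
    intro k
    induction k with
    | zero => exact fun x _ => rfl
    | succ n ih =>
      intro x hx
      rw [hrec n x hx, hhs n]
      have hd := Stmt16.deriv_congr_Ioi ih hx
      show _ = Stmt16.opA (hh n) x
      rw [show Stmt16.opA (hh n) x = -x * deriv (hh n) x - (1/2) * hh n x from rfl,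
        hd, ih hx]
  have hmc : ∀ a : ℕ, mulConvFract (g a) = mulConvFract (hh a) := by
    intro a; funext t
    exact setIntegral_congr_fun measurableSet_Ioi (fun x hx => by rw [hEq a hx])
  choose C hC0 hCb using fun k => (hGood k).bound hα
  have hAb : ∀ k, ∀ x ∈ Ioi (0:ℝ),
      |Stmt16.opA (hh k) x| ≤ C (k+1) * min (x ^ α) (x ^ (-1-α)) := by
    intro k x hx
    rw [← hhs k]
    exact hCb (k+1) x hx
  choose D hD0 hDb using fun k =>
    Stmt16.mulConv_bound hα ((hGood k).smooth.continuousOn) (hC0 k) (hCb k)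
  have hFd : ∀ k, ∀ t ∈ Ioi (0:ℝ),
      HasDerivAt (mulConvFract (hh k)) (deriv (mulConvFract (hh k)) t) t := by
    intro k t ht
    have h := (Stmt16.mulConv_hasDeriv hα (hGood k).smooth (hC0 k) (hC0 (k+1))
      (hCb k) (hAb k) ht).1
    rw [h.deriv]
    exact h
  have hFrel : ∀ k, ∀ t ∈ Ioi (0:ℝ), mulConvFract (hh (k+1)) t
      = -t * deriv (mulConvFract (hh k)) t - (1/2) * mulConvFract (hh k) t := by
    intro k t ht
    rw [hhs k]
    exact Stmt16.mulConv_opA hα (hGood k).smooth (hC0 k) (hC0 (k+1)) (hCb k) (hAb k) ht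
  have hFc : ∀ k, ContinuousOn (mulConvFract (hh k)) (Ioi (0:ℝ)) :=
    fun k t ht => ((hFd k t ht).continuousAt).continuousWithinAt
  have hPI : ∀ a b : ℕ, IntegrableOn
      (fun t => mulConvFract (hh a) t * mulConvFract (hh b) t) (Ioi (0:ℝ)) :=
    fun a b => Stmt16.prod_integrable (hFc a) (hFc b) (hD0 a) (hD0 b) (hDb a) (hDb b)
  have hpart1 : ∀ k m : ℕ, G k (m+1) + G (k+1) m = 0 := by
    intro k m
    set W : ℝ → ℝ := fun t => t * (mulConvFract (hh k) t * mulConvFract (hh m) t)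
      with hWdef
    set φ : ℝ → ℝ := fun t =>
      -(mulConvFract (hh (k+1)) t * mulConvFract (hh m) t)
        - mulConvFract (hh k) t * mulConvFract (hh (m+1)) t with hφdef
    have hW : ∀ t ∈ Ioi (0:ℝ), HasDerivAt W (φ t) t := by
      intro t ht
      have h := (hasDerivAt_id t).mul ((hFd k t ht).mul (hFd m t ht))
      have hval : φ t = 1 * (mulConvFract (hh k) t * mulConvFract (hh m) t)
          + id t * (deriv (mulConvFract (hh k)) t * mulConvFract (hh m) t
            + mulConvFract (hh k) t * deriv (mulConvFract (hh m)) t) := by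
        rw [hφdef]
        simp only [id_eq]
        rw [hFrel k t ht, hFrel m t ht]
        ring
      rw [hval]
      exact h
    have hφint : IntegrableOn φ (Ioi (0:ℝ)) := ((hPI (k+1) m).neg.sub (hPI k (m+1)))
    have hWtop : Tendsto W atTop (nhds 0) := by
      apply squeeze_zero_norm' (a := fun t : ℝ => (D k * D m) * t⁻¹)
      · filter_upwards [eventually_ge_atTop (1:ℝ)] with t ht1
        have ht0 : (0:ℝ) < t := lt_of_lt_of_le one_pos ht1
        have hb1 := hDb k t ht0
        have hb2 := hDb m t ht0
        have hmin : min (1:ℝ) t⁻¹ = t⁻¹ := min_eq_right (inv_le_one_of_one_le₀ ht1)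
        rw [hmin] at hb1 hb2
        have habs : ‖W t‖ = t * (|mulConvFract (hh k) t| * |mulConvFract (hh m) t|) := by
          rw [hWdef]
          simp only [Real.norm_eq_abs, abs_mul, abs_of_pos ht0]
        rw [habs]
        calc t * (|mulConvFract (hh k) t| * |mulConvFract (hh m) t|)
            ≤ t * ((D k * t⁻¹) * (D m * t⁻¹)) :=
              mul_le_mul_of_nonneg_left
                (mul_le_mul hb1 hb2 (abs_nonneg _)
                  (mul_nonneg (hD0 k) (inv_nonneg.2 ht0.le))) ht0.le
          _ = D k * D m * t⁻¹ * (t * t⁻¹) := by ring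
          _ = D k * D m * t⁻¹ := by rw [mul_inv_cancel₀ (ne_of_gt ht0), mul_one]
      · have h := (tendsto_inv_atTop_zero (𝕜 := ℝ)).const_mul (D k * D m)
        simpa using h
    have hWzero : Tendsto W (nhdsWithin 0 (Ioi 0)) (nhds 0) := by
      apply squeeze_zero_norm' (a := fun t : ℝ => (D k * D m) * t)
      · filter_upwards [self_mem_nhdsWithin] with t ht
        have ht0 : (0:ℝ) < t := ht
        have hb1 : |mulConvFract (hh k) t| ≤ D k := by
          refine (hDb k t ht0).trans ?_
          calc D k * min 1 t⁻¹ ≤ D k * 1 :=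
                mul_le_mul_of_nonneg_left (min_le_left _ _) (hD0 k)
            _ = D k := mul_one _
        have hb2 : |mulConvFract (hh m) t| ≤ D m := by
          refine (hDb m t ht0).trans ?_
          calc D m * min 1 t⁻¹ ≤ D m * 1 :=
                mul_le_mul_of_nonneg_left (min_le_left _ _) (hD0 m)
            _ = D m := mul_one _
        have habs : ‖W t‖ = t * (|mulConvFract (hh k) t| * |mulConvFract (hh m) t|) := by
          rw [hWdef]
          simp only [Real.norm_eq_abs, abs_mul, abs_of_pos ht0]
        rw [habs, mul_comm (D k * D m) t]
        exact mul_le_mul_of_nonneg_left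
          (mul_le_mul hb1 hb2 (abs_nonneg _) (hD0 k)) ht0.le
      · have h : Tendsto (fun t : ℝ => (D k * D m) * t) (nhds 0) (nhds 0) := by
          have hcont : Continuous fun t : ℝ => (D k * D m) * t := by
            exact continuous_const.mul continuous_id
          have := hcont.tendsto (0:ℝ)
          simpa using this
        exact h.mono_left nhdsWithin_le_nhds
    have hIoiε : ∀ ε : ℝ, 0 < ε → ∫ t in Ioi ε, φ t = - W ε := by
      intro ε hε
      have h := integral_Ioi_of_hasDerivAt_of_tendsto
        (f := W) (f' := φ) (a := ε)
        ((hW ε hε).continuousAt.continuousWithinAt)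
        (fun x hx => hW x (lt_trans hε hx))
        (hφint.mono_set (Ioi_subset_Ioi hε.le))
        hWtop
      rw [h, zero_sub]
    have hseq : Tendsto (fun n : ℕ => (1/((n:ℝ)+1) : ℝ)) atTop (nhdsWithin 0 (Ioi 0)) := by
      apply tendsto_nhdsWithin_of_tendsto_nhds_of_eventually_within
      · exact tendsto_one_div_add_atTop_nhds_zero_nat
      · filter_upwards with n
        have : (0:ℝ) < 1/((n:ℝ)+1) := by positivity
        exact this
    have hmono : Monotone (fun n : ℕ => Ioi (1/((n:ℝ)+1))) := by
      intro a b hab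
      apply Ioi_subset_Ioi
      apply one_div_le_one_div_of_le (by positivity)
      have : (a:ℝ) ≤ (b:ℝ) := Nat.cast_le.2 hab
      linarith
    have hunion : (⋃ n : ℕ, Ioi (1/((n:ℝ)+1))) = Ioi (0:ℝ) := by
      ext x
      simp only [mem_iUnion, mem_Ioi]
      constructor
      · rintro ⟨n, hn⟩
        exact lt_trans (by positivity) hn
      · intro hx
        exact exists_nat_one_div_lt hx
    have htend := tendsto_setIntegral_of_monotone (fun n : ℕ => measurableSet_Ioi)
      hmono (by rw [hunion]; exact hφint)
    rw [hunion] at htend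
    have htend2 : Tendsto (fun n : ℕ => ∫ t in Ioi (1/((n:ℝ)+1)), φ t) atTop (nhds 0) := by
      have heq : ∀ n : ℕ, ∫ t in Ioi (1/((n:ℝ)+1)), φ t = - W (1/((n:ℝ)+1)) :=
        fun n => hIoiε _ (by positivity)
      apply Tendsto.congr (fun n => (heq n).symm)
      have h := (hWzero.comp hseq).neg
      simpa using h
    have hφzero : ∫ t in Ioi (0:ℝ), φ t = 0 := tendsto_nhds_unique htend htend2
    rw [hG k (m+1), hG (k+1) m, hmc k, hmc (m+1), hmc (k+1), hmc m,
      ← integral_add (hPI k (m+1)) (hPI (k+1) m)]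
    rw [show (fun t => mulConvFract (hh k) t * mulConvFract (hh (m+1)) t
        + mulConvFract (hh (k+1)) t * mulConvFract (hh m) t) = fun t => -φ t by
      funext t; rw [hφdef]; ring]
    rw [integral_neg, hφzero, neg_zero]
  constructor
  · intro k j hj
    obtain ⟨m, rfl⟩ : ∃ m, j = m + 1 := ⟨j - 1, (Nat.succ_pred_eq_of_pos hj).symm⟩
    simpa using hpart1 k m
  · intro k
    have h1 := hpart1 k k
    have hsym : G (k+1) k = G k (k+1) := by
      rw [hG (k+1) k, hG k (k+1)]
      exact setIntegral_congr_fun measurableSet_Ioi (fun t ht => mul_comm _ _)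
    linarith
end

section
/- Let α > 0 and let g_0 ∈ C^∞((0,∞)) satisfy, for every k ≥ 0, lim_{x→0} x^{k-α} g_0^{(k)}(x) = 0 and lim_{x→∞} x^{k+1+α} g_0^{(k)}(x) = 0. Define inductively g_{k+1}(x) = -x·g_k'(x) - (1/2)·g_k(x), and set b_k = ∫₀^1 g_k^×(t) dt where g_k^×(t) = ∫₀^∞ {x/t} g_k(x)/x dx. Then for every k ≥ 0, b_{k+1} = -∫₀^∞ {x} g_k(x)/x dx + (1/2)·b_k. -/
open MeasureTheory Set Filter

section StmtAux

open Real



lemma exists_bound {f : ℝ → ℝ} {a b : ℝ} (hf : ContinuousOn f (Ioi 0)) (ha : 0 < a) (hb : 0 < b)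
    (h0 : Tendsto (fun x => x ^ (-a) * f x) (nhdsWithin 0 (Ioi 0)) (nhds 0))
    (hi : Tendsto (fun x => x ^ b * f x) atTop (nhds 0)) :
    ∃ C : ℝ, 0 ≤ C ∧ ∀ x ∈ Ioi (0:ℝ), |f x| ≤ C * min (x ^ a) (x ^ (-b)) := by
  have h1 : ∀ᶠ x in nhdsWithin 0 (Ioi (0:ℝ)), |x ^ (-a) * f x| < 1 := by
    have := h0.abs
    rw [abs_zero] at this
    exact this.eventually_lt_const one_pos
  obtain ⟨δ, hδpos, hδ⟩ := Metric.mem_nhdsWithin_iff.mp h1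
  have h2 : ∀ᶠ x in atTop, |x ^ b * f x| < 1 := by
    have := hi.abs
    rw [abs_zero] at this
    exact this.eventually_lt_const one_pos
  obtain ⟨M, hM⟩ := eventually_atTop.mp h2
  set δ' : ℝ := min δ 1 with hδ'
  set M' : ℝ := max M 1 with hM'
  have hδ'pos : 0 < δ' := lt_min hδpos one_pos
  have hδ'le1 : δ' ≤ 1 := min_le_right _ _
  have hM'ge1 : (1:ℝ) ≤ M' := le_max_right _ _
  have hKsub : Icc δ' M' ⊆ Ioi (0:ℝ) := fun x hx => lt_of_lt_of_le hδ'pos hx.1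
  -- bound on compact middle part
  obtain ⟨K, hK⟩ := (isCompact_Icc (a := δ') (b := M')).exists_bound_of_continuousOn
    (hf.mono hKsub)
  -- positive min of the weight on the compact part
  have hwcont : ContinuousOn (fun x : ℝ => min (x ^ a) (x ^ (-b))) (Icc δ' M') := by
    intro x hx
    exact ((Real.continuousAt_rpow_const x a (Or.inl (ne_of_gt (hKsub hx)))).continuousWithinAt).min
      ((Real.continuousAt_rpow_const x (-b) (Or.inl (ne_of_gt (hKsub hx)))).continuousWithinAt)
  have hne : (Icc δ' M').Nonempty := nonempty_Icc.mpr (le_trans hδ'le1 hM'ge1)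
  obtain ⟨x₀, hx₀mem, hx₀min⟩ := (isCompact_Icc (a := δ') (b := M')).exists_isMinOn hne hwcont
  set m : ℝ := min (x₀ ^ a) (x₀ ^ (-b)) with hm
  have hmpos : 0 < m :=
    lt_min (rpow_pos_of_pos (hKsub hx₀mem) a) (rpow_pos_of_pos (hKsub hx₀mem) (-b))
  set C : ℝ := max 1 ((max K 0) / m) with hC
  have hC1 : (1:ℝ) ≤ C := le_max_left _ _
  have hC0 : 0 ≤ C := le_trans zero_le_one hC1
  refine ⟨C, hC0, fun x hx => ?_⟩
  have hxpos : (0:ℝ) < x := hx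
  have hwnonneg : 0 ≤ min (x ^ a) (x ^ (-b)) :=
    le_min (rpow_pos_of_pos hxpos a).le (rpow_pos_of_pos hxpos (-b)).le
  rcases lt_or_ge x δ' with hcase | hcase
  · -- near zero
    have hmem : x ∈ Metric.ball (0:ℝ) δ ∩ Ioi 0 := by
      constructor
      · rw [Metric.mem_ball, Real.dist_eq, sub_zero, abs_of_pos hxpos]
        exact lt_of_lt_of_le hcase (min_le_left _ _)
      · exact hx
    have hb1 : |x ^ (-a) * f x| < 1 := hδ hmem
    rw [abs_mul, abs_of_pos (rpow_pos_of_pos hxpos (-a))] at hb1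
    have hfx : |f x| ≤ x ^ a := by
      have : x ^ a * (x ^ (-a) * |f x|) ≤ x ^ a * 1 :=
        mul_le_mul_of_nonneg_left hb1.le (rpow_pos_of_pos hxpos a).le
      rwa [← mul_assoc, ← rpow_add hxpos, add_neg_cancel, rpow_zero, one_mul, mul_one] at this
    have hminx : min (x ^ a) (x ^ (-b)) = x ^ a := by
      apply min_eq_left
      calc x ^ a ≤ 1 := rpow_le_one hxpos.le (le_trans hcase.le hδ'le1) ha.le
        _ ≤ x ^ (-b) := one_le_rpow_of_pos_of_le_one_of_nonpos hxpos
              (le_trans hcase.le hδ'le1) (neg_nonpos.mpr hb.le)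
    rw [hminx]
    calc |f x| ≤ x ^ a := hfx
      _ = 1 * x ^ a := (one_mul _).symm
      _ ≤ C * x ^ a := mul_le_mul_of_nonneg_right hC1 (rpow_pos_of_pos hxpos a).le
  · rcases le_or_gt x M' with hcase2 | hcase2
    · -- middle
      have hxK : x ∈ Icc δ' M' := ⟨hcase, hcase2⟩
      have hfx : |f x| ≤ max K 0 := le_trans (hK x hxK) (le_max_left _ _)
      have hwge : m ≤ min (x ^ a) (x ^ (-b)) := hx₀min hxK
      calc |f x| ≤ max K 0 := hfx
        _ = (max K 0) / m * m := by field_simp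
        _ ≤ C * m := mul_le_mul_of_nonneg_right (le_max_right _ _) hmpos.le
        _ ≤ C * min (x ^ a) (x ^ (-b)) := mul_le_mul_of_nonneg_left hwge hC0
    · -- near infinity
      have hx1 : (1:ℝ) ≤ x := le_trans hM'ge1 hcase2.le
      have hb1 : |x ^ b * f x| < 1 := hM x (le_trans (le_max_left _ _) hcase2.le)
      rw [abs_mul, abs_of_pos (rpow_pos_of_pos hxpos b)] at hb1
      have hfx : |f x| ≤ x ^ (-b) := by
        have : x ^ (-b) * (x ^ b * |f x|) ≤ x ^ (-b) * 1 :=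
          mul_le_mul_of_nonneg_left hb1.le (rpow_pos_of_pos hxpos (-b)).le
        rwa [← mul_assoc, ← rpow_add hxpos, neg_add_cancel, rpow_zero, one_mul, mul_one] at this
      have hminx : min (x ^ a) (x ^ (-b)) = x ^ (-b) := by
        apply min_eq_right
        calc x ^ (-b) ≤ 1 := rpow_le_one_of_one_le_of_nonpos hx1 (neg_nonpos.mpr hb.le)
          _ ≤ x ^ a := one_le_rpow hx1 ha.le
      rw [hminx]
      calc |f x| ≤ x ^ (-b) := hfx
        _ = 1 * x ^ (-b) := (one_mul _).symm
        _ ≤ C * x ^ (-b) := mul_le_mul_of_nonneg_right hC1 (rpow_pos_of_pos hxpos (-b)).le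


lemma contOn_rpow (a : ℝ) : ContinuousOn (fun x : ℝ => x ^ a) (Ioi 0) :=
  fun x hx => (Real.continuousAt_rpow_const x a (Or.inl (ne_of_gt hx))).continuousWithinAt

lemma contOn_weight (a b : ℝ) : ContinuousOn (fun x : ℝ => min (x ^ a) (x ^ (-b))) (Ioi 0) :=
  fun x hx => ((contOn_rpow a x hx)).min ((contOn_rpow (-b) x hx))

lemma contOn_weight_div (a b : ℝ) :
    ContinuousOn (fun x : ℝ => min (x ^ a) (x ^ (-b)) / x) (Ioi 0) :=
  (contOn_weight a b).div continuousOn_id (fun x hx => ne_of_gt hx)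

lemma intW {a b : ℝ} (ha : 0 < a) (hb : 0 < b) :
    IntegrableOn (fun x : ℝ => min (x ^ a) (x ^ (-b)) / x) (Ioi 0) := by
  have hsplit : Ioi (0:ℝ) = Ioc 0 1 ∪ Ioi 1 := (Ioc_union_Ioi_eq_Ioi zero_le_one).symm
  rw [hsplit]
  apply IntegrableOn.union
  · apply Integrable.mono' (g := fun x : ℝ => x ^ (a - 1))
    · have : IntegrableOn (fun x : ℝ => x ^ (a - 1)) (Ioc (0:ℝ) 1) := by
        rw [integrableOn_Ioc_iff_integrableOn_Ioo]
        exact (intervalIntegral.integrableOn_Ioo_rpow_iff zero_lt_one).mpr (by linarith)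
      exact this
    · exact ((contOn_weight_div a b).mono Ioc_subset_Ioi_self).aestronglyMeasurable
        measurableSet_Ioc
    · filter_upwards [ae_restrict_mem measurableSet_Ioc] with y hy
      have hypos : 0 < y := hy.1
      have h0 : 0 ≤ min (y ^ a) (y ^ (-b)) / y :=
        div_nonneg (le_min (rpow_pos_of_pos hypos a).le (rpow_pos_of_pos hypos (-b)).le) hypos.le
      rw [Real.norm_eq_abs, abs_of_nonneg h0, rpow_sub hypos, rpow_one]
      exact div_le_div_of_nonneg_right (min_le_left _ _) hypos.le
  · apply Integrable.mono' (g := fun x : ℝ => x ^ (-b - 1))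
    · exact integrableOn_Ioi_rpow_of_lt (by linarith) one_pos
    · exact ((contOn_weight_div a b).mono (Ioi_subset_Ioi zero_le_one)).aestronglyMeasurable
        measurableSet_Ioi
    · filter_upwards [ae_restrict_mem measurableSet_Ioi] with y hy
      have hypos : (0:ℝ) < y := lt_trans one_pos hy
      have h0 : 0 ≤ min (y ^ a) (y ^ (-b)) / y :=
        div_nonneg (le_min (rpow_pos_of_pos hypos a).le (rpow_pos_of_pos hypos (-b)).le) hypos.le
      rw [Real.norm_eq_abs, abs_of_nonneg h0, rpow_sub hypos, rpow_one]
      exact div_le_div_of_nonneg_right (min_le_right _ _) hypos.le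

-- substitution: ∫_{(0,1)} {x/t} dt = x * ∫_{(x,∞)} {u}/u² du  (x > 0)
lemma subst_eq {x : ℝ} (hx : 0 < x) :
    (∫ u in Ioi x, Int.fract u / u ^ 2) = (∫ t in Ioo (0:ℝ) 1, Int.fract (x / t)) / x := by
  have himg : (fun t : ℝ => x / t) '' Ioo 0 1 = Ioi x := by
    ext u
    constructor
    · rintro ⟨t, ht, rfl⟩
      have ht0 := ht.1
      have ht1 := ht.2
      rw [mem_Ioi]
      rw [lt_div_iff₀ ht0]
      nlinarith
    · intro hu
      have hu' : x < u := hu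
      have hupos : 0 < u := lt_trans hx hu'
      refine ⟨x / u, ⟨div_pos hx hupos, (div_lt_one hupos).mpr hu'⟩, ?_⟩
      field_simp
  have hderiv : ∀ t ∈ Ioo (0:ℝ) 1, HasDerivWithinAt (fun t : ℝ => x / t) (-(x / t ^ 2)) (Ioo 0 1) t := by
    intro t ht
    have : HasDerivAt (fun t : ℝ => x / t) (x * (-(t ^ 2)⁻¹)) t := by
      simpa [div_eq_mul_inv] using (hasDerivAt_inv (ne_of_gt ht.1)).const_mul x
    exact this.hasDerivWithinAt.congr_deriv (by ring)
  have hinj : InjOn (fun t : ℝ => x / t) (Ioo 0 1) := by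
    intro s hs t ht h
    have hs0 := hs.1
    have ht0 := ht.1
    have h' : x / s = x / t := h
    rw [div_eq_div_iff hs0.ne' ht0.ne'] at h'
    exact (mul_left_cancel₀ hx.ne' h').symm
  have := integral_image_eq_integral_abs_deriv_smul measurableSet_Ioo hderiv hinj
    (fun u => Int.fract u / u ^ 2)
  rw [himg] at this
  rw [this]
  rw [eq_div_iff (ne_of_gt hx), ← integral_mul_const]
  apply setIntegral_congr_fun measurableSet_Ioo
  intro t ht
  have ht0 := ht.1
  have h2 : |(-(x / t ^ 2))| = x / t ^ 2 := by
    rw [abs_neg, abs_of_pos (div_pos hx (pow_pos ht0 2))]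
  simp only [smul_eq_mul, h2]
  rw [div_pow]
  field_simp


lemma abs_fract_le (y : ℝ) : |Int.fract y| ≤ 1 := by
  rw [abs_of_nonneg (Int.fract_nonneg _)]
  exact (Int.fract_lt_one _).le

lemma fub1 {f : ℝ → ℝ} {C a b : ℝ} (hf : ContinuousOn f (Ioi 0)) (ha : 0 < a) (hb : 0 < b)
    (hC : ∀ x ∈ Ioi (0:ℝ), |f x| ≤ C * min (x ^ a) (x ^ (-b))) :
    Integrable (fun x => f x * ∫ u in Ioi x, Int.fract u / u ^ 2)
      (volume.restrict (Ioi (0:ℝ))) ∧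
    (∫ t in Ioo (0:ℝ) 1, ∫ x in Ioi (0:ℝ), Int.fract (x / t) * f x / x)
      = ∫ x in Ioi (0:ℝ), f x * ∫ u in Ioi x, Int.fract u / u ^ 2 := by
  set μ := volume.restrict (Ioo (0:ℝ) 1) with hμ
  set ν := volume.restrict (Ioi (0:ℝ)) with hν
  have hF : AEStronglyMeasurable (fun p : ℝ × ℝ => Int.fract (p.2 / p.1) * f p.2 / p.2)
      (μ.prod ν) := by
    simp only [div_eq_mul_inv]
    exact (((measurable_fract.comp (measurable_snd.div measurable_fst)).aestronglyMeasurable).mul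
        ((hf.aestronglyMeasurable measurableSet_Ioi).comp_snd)).mul
        measurable_snd.inv.aestronglyMeasurable
  have hB : Integrable (fun p : ℝ × ℝ => (1:ℝ) * (C * (min (p.2 ^ a) (p.2 ^ (-b)) / p.2)))
      (μ.prod ν) := (integrable_const (1:ℝ)).mul_prod ((intW ha hb).const_mul C)
  have hCnonneg : 0 ≤ C := by
    have := hC 1 (by norm_num)
    have h1 : min ((1:ℝ) ^ a) ((1:ℝ) ^ (-b)) = 1 := by
      rw [Real.one_rpow, Real.one_rpow, min_self]
    rw [h1, mul_one] at this
    exact le_trans (abs_nonneg _) this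
  have hprodres : μ.prod ν = (volume.prod volume).restrict ((Ioo (0:ℝ) 1) ×ˢ (Ioi (0:ℝ))) := by
    rw [hμ, hν, Measure.prod_restrict]
  have hFint : Integrable (fun p : ℝ × ℝ => Int.fract (p.2 / p.1) * f p.2 / p.2) (μ.prod ν) := by
    apply hB.mono' hF
    rw [hprodres]
    filter_upwards [ae_restrict_mem (measurableSet_Ioo.prod measurableSet_Ioi)] with p hp
    obtain ⟨hp1, hp2⟩ := hp
    have hp2' : (0:ℝ) < p.2 := hp2
    rw [Real.norm_eq_abs, abs_div, abs_of_pos hp2', abs_mul]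
    calc |Int.fract (p.2 / p.1)| * |f p.2| / p.2
        ≤ 1 * |f p.2| / p.2 := by
          apply div_le_div_of_nonneg_right _ hp2'.le
          exact mul_le_mul_of_nonneg_right (abs_fract_le _) (abs_nonneg _)
      _ = |f p.2| / p.2 := by rw [one_mul]
      _ ≤ (C * min (p.2 ^ a) (p.2 ^ (-b))) / p.2 :=
          div_le_div_of_nonneg_right (hC p.2 hp2) hp2'.le
      _ = 1 * (C * (min (p.2 ^ a) (p.2 ^ (-b)) / p.2)) := by ring
  have hswap := integral_integral_swap
    (f := fun t x => Int.fract (x / t) * f x / x) (μ := μ) (ν := ν) hFint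
  have hinner : ∀ x ∈ Ioi (0:ℝ),
      (∫ t in Ioo (0:ℝ) 1, Int.fract (x / t) * f x / x)
        = f x * ∫ u in Ioi x, Int.fract u / u ^ 2 := by
    intro x hx
    have hx' : (0:ℝ) < x := hx
    have hrw : (fun t => Int.fract (x / t) * f x / x) = fun t => Int.fract (x / t) * (f x / x) := by
      funext t; rw [mul_div_assoc]
    rw [hrw, integral_mul_const, subst_eq hx']
    field_simp
  constructor
  · refine Integrable.congr (Integrable.integral_prod_right hFint) ?_
    rw [hν]
    filter_upwards [ae_restrict_mem measurableSet_Ioi] with x hx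
    exact hinner x hx
  · rw [hswap]
    apply setIntegral_congr_fun measurableSet_Ioi
    intro x hx
    exact hinner x hx


lemma intFract2 {x : ℝ} (hx : 0 < x) :
    IntegrableOn (fun u : ℝ => Int.fract u / u ^ 2) (Ioi x) := by
  apply Integrable.mono' (g := fun u : ℝ => u ^ (-2 : ℝ))
  · exact integrableOn_Ioi_rpow_of_lt (by norm_num) hx
  · exact ((measurable_fract.div ((measurable_id.pow_const 2))).aestronglyMeasurable)
  · filter_upwards [ae_restrict_mem measurableSet_Ioi] with u hu
    have hu' : (0:ℝ) < u := lt_trans hx hu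
    rw [Real.norm_eq_abs, abs_div, abs_of_pos (pow_pos hu' 2)]
    rw [Real.rpow_neg hu'.le, show ((2:ℝ)) = ((2:ℕ):ℝ) by norm_num, Real.rpow_natCast]
    rw [div_eq_mul_inv]
    apply mul_le_of_le_one_left (inv_nonneg.mpr (pow_pos hu' 2).le) (abs_fract_le u) |>.trans
    exact le_refl _

lemma intFract2_abs_le {x : ℝ} (hx : 0 < x) :
    (∫ u in Ioi x, |Int.fract u / u ^ 2|) ≤ x⁻¹ := by
  have hrpow : ∫ u in Ioi x, u ^ (-2 : ℝ) = x⁻¹ := by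
    rw [integral_Ioi_rpow_of_lt (by norm_num) hx]
    norm_num
    rw [Real.rpow_neg_one]
  rw [← hrpow]
  apply setIntegral_mono_on (intFract2 hx).abs (integrableOn_Ioi_rpow_of_lt (by norm_num) hx)
    measurableSet_Ioi
  intro u hu
  have hu' : (0:ℝ) < u := lt_trans hx hu
  rw [abs_div, abs_of_pos (pow_pos hu' 2), Real.rpow_neg hu'.le,
    show ((2:ℝ)) = ((2:ℕ):ℝ) by norm_num, Real.rpow_natCast, div_eq_mul_inv]
  exact mul_le_of_le_one_left (inv_nonneg.mpr (pow_pos hu' 2).le) (abs_fract_le u)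

lemma fub2 {f : ℝ → ℝ} {C a b : ℝ} (hf : ContinuousOn f (Ioi 0)) (ha : 0 < a) (hb : 0 < b)
    (hC : ∀ x ∈ Ioi (0:ℝ), |f x| ≤ C * min (x ^ a) (x ^ (-b))) :
    Integrable (fun u => Int.fract u / u ^ 2 * ∫ x in Ioo (0:ℝ) u, f x)
      (volume.restrict (Ioi (0:ℝ))) ∧
    (∫ x in Ioi (0:ℝ), f x * ∫ u in Ioi x, Int.fract u / u ^ 2)
      = ∫ u in Ioi (0:ℝ), Int.fract u / u ^ 2 * ∫ x in Ioo (0:ℝ) u, f x := by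
  set ν := volume.restrict (Ioi (0:ℝ)) with hν
  set G : ℝ × ℝ → ℝ := fun p => Int.fract p.2 / p.2 ^ 2 * f p.1 with hG
  set S : Set (ℝ × ℝ) := {p : ℝ × ℝ | p.1 < p.2} with hS
  have hSmeas : MeasurableSet S := measurableSet_lt measurable_fst measurable_snd
  set F : ℝ × ℝ → ℝ := S.indicator G with hF
  have hGm : AEStronglyMeasurable G (ν.prod ν) := by
    apply AEStronglyMeasurable.mul
    · exact ((measurable_fract.comp measurable_snd).div
        ((measurable_snd.pow_const 2))).aestronglyMeasurable
    · exact (hf.aestronglyMeasurable measurableSet_Ioi).comp_fst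
  have hFm : AEStronglyMeasurable F (ν.prod ν) := hGm.indicator hSmeas
  -- sections in u for fixed x
  have hsec : ∀ x : ℝ, (fun u => F (x, u)) = (Ioi x).indicator
      (fun u => Int.fract u / u ^ 2 * f x) := by
    intro x
    funext u
    simp only [hF, hG, hS, Set.indicator_apply, mem_setOf_eq, mem_Ioi]
  have hsec2 : ∀ u : ℝ, (fun x => F (x, u)) = (Iio u).indicator
      (fun x => Int.fract u / u ^ 2 * f x) := by
    intro u
    funext x
    simp only [hF, hG, hS, Set.indicator_apply, mem_setOf_eq, mem_Iio]
  -- integrability of sections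
  have hsecint : ∀ x ∈ Ioi (0:ℝ), Integrable (fun u => F (x, u)) ν := by
    intro x hx
    rw [hsec x, hν]
    apply (IntegrableOn.integrable_indicator _ measurableSet_Ioi)
    rw [IntegrableOn, Measure.restrict_restrict measurableSet_Ioi,
      inter_eq_self_of_subset_left (Ioi_subset_Ioi (le_of_lt hx))]
    exact (intFract2 hx).mul_const (f x)
  -- the integral of the norm of sections is bounded
  have hsecbound : ∀ x ∈ Ioi (0:ℝ),
      (∫ u, ‖F (x, u)‖ ∂ν) ≤ C * (min (x ^ a) (x ^ (-b)) / x) := by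
    intro x hx
    have hx' : (0:ℝ) < x := hx
    have h1 : (∫ u, ‖F (x, u)‖ ∂ν) = ∫ u in Ioi x, |Int.fract u / u ^ 2 * f x| := by
      have hn : (fun u => ‖F (x, u)‖)
          = (Ioi x).indicator (fun u => ‖Int.fract u / u ^ 2 * f x‖) := by
        funext u
        rw [show F (x, u) = (Ioi x).indicator (fun u => Int.fract u / u ^ 2 * f x) u from
          congrFun (hsec x) u]
        simp [Set.indicator_apply, apply_ite norm]
      rw [hν, hn, integral_indicator measurableSet_Ioi,
        Measure.restrict_restrict measurableSet_Ioi,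
        inter_eq_self_of_subset_left (Ioi_subset_Ioi (le_of_lt hx))]
      simp only [Real.norm_eq_abs]
    rw [h1]
    have h2 : ∫ u in Ioi x, |Int.fract u / u ^ 2 * f x|
        = (∫ u in Ioi x, |Int.fract u / u ^ 2|) * |f x| := by
      rw [← integral_mul_const]
      congr 1
      funext u
      rw [abs_mul]
    rw [h2]
    calc (∫ u in Ioi x, |Int.fract u / u ^ 2|) * |f x|
        ≤ x⁻¹ * |f x| := by
          apply mul_le_mul_of_nonneg_right (intFract2_abs_le hx') (abs_nonneg _)
      _ ≤ x⁻¹ * (C * min (x ^ a) (x ^ (-b))) :=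
          mul_le_mul_of_nonneg_left (hC x hx) (inv_nonneg.mpr hx'.le)
      _ = C * (min (x ^ a) (x ^ (-b)) / x) := by
          rw [div_eq_mul_inv]; ring
  -- integrability on the product
  have hFint : Integrable F (ν.prod ν) := by
    rw [integrable_prod_iff hFm]
    constructor
    · rw [hν]
      filter_upwards [ae_restrict_mem measurableSet_Ioi] with x hx
      exact hsecint x hx
    · apply Integrable.mono' ((intW ha hb).const_mul C)
        (hFm.norm.integral_prod_right')
      rw [hν]
      filter_upwards [ae_restrict_mem measurableSet_Ioi] with x hx
      rw [Real.norm_eq_abs, abs_of_nonneg (integral_nonneg (fun u => norm_nonneg _))]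
      exact hsecbound x hx
  -- swap
  have hswap := integral_integral_swap (f := fun x u => F (x, u)) (μ := ν) (ν := ν) hFint
  -- inner integral in u
  have hinner1 : ∀ x ∈ Ioi (0:ℝ),
      (∫ u, F (x, u) ∂ν) = f x * ∫ u in Ioi x, Int.fract u / u ^ 2 := by
    intro x hx
    rw [hsec x, hν, integral_indicator measurableSet_Ioi,
      Measure.restrict_restrict measurableSet_Ioi,
      inter_eq_self_of_subset_left (Ioi_subset_Ioi (le_of_lt hx)),
      integral_mul_const, mul_comm]
  -- inner integral in x
  have hinner2 : ∀ u ∈ Ioi (0:ℝ),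
      (∫ x, F (x, u) ∂ν) = Int.fract u / u ^ 2 * ∫ x in Ioo (0:ℝ) u, f x := by
    intro u hu
    rw [hsec2 u, hν, integral_indicator measurableSet_Iio,
      Measure.restrict_restrict measurableSet_Iio, Iio_inter_Ioi,
      integral_const_mul]
  constructor
  · refine Integrable.congr (Integrable.integral_prod_right hFint) ?_
    rw [hν]
    filter_upwards [ae_restrict_mem measurableSet_Ioi] with u hu
    exact hinner2 u hu
  · calc (∫ x in Ioi (0:ℝ), f x * ∫ u in Ioi x, Int.fract u / u ^ 2)
        = ∫ x, (∫ u, F (x, u) ∂ν) ∂ν := by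
          rw [hν]
          symm
          apply setIntegral_congr_fun measurableSet_Ioi
          intro x hx
          exact hinner1 x hx
      _ = ∫ u, (∫ x, F (x, u) ∂ν) ∂ν := hswap
      _ = ∫ u in Ioi (0:ℝ), Int.fract u / u ^ 2 * ∫ x in Ioo (0:ℝ) u, f x := by
          rw [hν]
          apply setIntegral_congr_fun measurableSet_Ioi
          intro u hu
          exact hinner2 u hu


lemma ftc_zero {φ ψ : ℝ → ℝ} {u : ℝ} (hu : 0 < u)
    (hd : ∀ x ∈ Ioi (0:ℝ), HasDerivAt φ (ψ x) x)
    (hint : IntegrableOn ψ (Ioc 0 u))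
    (h0 : Tendsto φ (nhdsWithin 0 (Ioi 0)) (nhds 0)) :
    ∫ x in Ioo (0:ℝ) u, ψ x = φ u := by
  set ε : ℕ → ℝ := fun n => u / (n + 2) with hε
  have hεpos : ∀ n, 0 < ε n := fun n => div_pos hu (by positivity)
  have hεlt : ∀ n, ε n < u := by
    intro n
    rw [hε, div_lt_iff₀ (by positivity : (0:ℝ) < (n:ℝ) + 2)]
    nlinarith [hu]
  have hεanti : ∀ n m : ℕ, n ≤ m → ε m ≤ ε n := by
    intro n m hnm
    apply div_le_div_of_nonneg_left hu.le (by positivity)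
    have : (n:ℝ) ≤ m := Nat.cast_le.mpr hnm
    linarith
  have hεto : Tendsto ε atTop (nhdsWithin 0 (Ioi 0)) := by
    apply tendsto_nhdsWithin_of_tendsto_nhds_of_eventually_within
    · rw [hε]
      have : Tendsto (fun n : ℕ => (n:ℝ) + 2) atTop atTop :=
        tendsto_atTop_add_const_right _ 2 tendsto_natCast_atTop_atTop
      simpa using tendsto_const_nhds.div_atTop this
    · exact Eventually.of_forall (fun n => hεpos n)
  -- FTC on each [ε n, u]
  have hftc : ∀ n, ∫ x in Set.Ioc (ε n) u, ψ x = φ u - φ (ε n) := by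
    intro n
    have h1 : ∫ x in (ε n)..u, ψ x = φ u - φ (ε n) := by
      apply intervalIntegral.integral_eq_sub_of_hasDerivAt
      · intro x hx
        rw [uIcc_of_le (hεlt n).le] at hx
        exact hd x (lt_of_lt_of_le (hεpos n) hx.1)
      · rw [intervalIntegrable_iff_integrableOn_Ioc_of_le (hεlt n).le]
        exact hint.mono_set (Ioc_subset_Ioc_left (hεpos n).le)
    rw [← h1, intervalIntegral.integral_of_le (hεlt n).le]
  -- limit of set integrals
  have hmono : Monotone (fun n => Set.Ioc (ε n) u) := by
    intro n m hnm
    exact Ioc_subset_Ioc_left (hεanti n m hnm)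
  have hunion : ⋃ n, Set.Ioc (ε n) u = Ioc 0 u := by
    apply Subset.antisymm
    · exact iUnion_subset fun n => Ioc_subset_Ioc_left (hεpos n).le
    · intro x hx
      obtain ⟨n, hn⟩ := exists_nat_gt (u / x)
      refine mem_iUnion.mpr ⟨n, ?_, hx.2⟩
      rw [hε, div_lt_iff₀ (by positivity : (0:ℝ) < (n:ℝ) + 2)]
      have h2 : u / x < (n:ℝ) + 2 := lt_trans hn (by linarith)
      rw [div_lt_iff₀ hx.1] at h2
      linarith
  have hlim1 : Tendsto (fun n => ∫ x in Set.Ioc (ε n) u, ψ x) atTop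
      (nhds (∫ x in Ioc 0 u, ψ x)) := by
    have := tendsto_setIntegral_of_monotone (fun n => measurableSet_Ioc) hmono
      (by rw [hunion]; exact hint)
    rwa [hunion] at this
  have hlim2 : Tendsto (fun n => φ u - φ (ε n)) atTop (nhds (φ u - 0)) :=
    tendsto_const_nhds.sub (h0.comp hεto)
  have := tendsto_nhds_unique hlim1 (by simpa only [hftc] using hlim2 : Tendsto
    (fun n => ∫ x in Set.Ioc (ε n) u, ψ x) atTop (nhds (φ u - 0)))
  rw [← integral_Ioc_eq_integral_Ioo, this, sub_zero]


lemma iterCD {h : ℝ → ℝ} (hsm : ContDiffOn ℝ (⊤ : ℕ∞) h (Ioi 0)) :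
    ∀ j : ℕ, ContDiffOn ℝ (⊤ : ℕ∞) (iteratedDeriv j h) (Ioi 0) := by
  intro j
  induction j with
  | zero => simpa [iteratedDeriv_zero] using hsm
  | succ j ih =>
    rw [iteratedDeriv_succ]
    exact ih.deriv_of_isOpen isOpen_Ioi (by simp)

lemma iterHD {h : ℝ → ℝ} (hsm : ContDiffOn ℝ (⊤ : ℕ∞) h (Ioi 0)) :
    ∀ j : ℕ, ∀ x ∈ Ioi (0:ℝ), HasDerivAt (iteratedDeriv j h) (iteratedDeriv (j+1) h x) x := by
  intro j x hx
  have hdiff : DifferentiableAt ℝ (iteratedDeriv j h) x :=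
    ((iterCD hsm j).contDiffAt (Ioi_mem_nhds hx)).differentiableAt (by simp)
  rw [iteratedDeriv_succ]
  exact hdiff.hasDerivAt

lemma hered {α : ℝ} {h h2 : ℝ → ℝ}
    (hsm : ContDiffOn ℝ (⊤ : ℕ∞) h (Ioi 0))
    (h0 : ∀ j : ℕ, Tendsto (fun x : ℝ => x ^ ((j:ℝ) - α) * iteratedDeriv j h x)
      (nhdsWithin 0 (Ioi 0)) (nhds 0))
    (hi : ∀ j : ℕ, Tendsto (fun x : ℝ => x ^ ((j:ℝ) + 1 + α) * iteratedDeriv j h x)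
      atTop (nhds 0))
    (heq : ∀ x ∈ Ioi (0:ℝ), h2 x = -x * deriv h x - (1/2) * h x) :
    ContDiffOn ℝ (⊤ : ℕ∞) h2 (Ioi 0) ∧
    (∀ j : ℕ, Tendsto (fun x : ℝ => x ^ ((j:ℝ) - α) * iteratedDeriv j h2 x)
      (nhdsWithin 0 (Ioi 0)) (nhds 0)) ∧
    (∀ j : ℕ, Tendsto (fun x : ℝ => x ^ ((j:ℝ) + 1 + α) * iteratedDeriv j h2 x)
      atTop (nhds 0)) := by
  have hform : ∀ j : ℕ, ∀ x ∈ Ioi (0:ℝ), iteratedDeriv j h2 x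
      = -x * iteratedDeriv (j+1) h x - ((j:ℝ) + 1/2) * iteratedDeriv j h x := by
    intro j
    induction j with
    | zero =>
      intro x hx
      rw [iteratedDeriv_zero, heq x hx, iteratedDeriv_one, iteratedDeriv_zero]
      norm_num
    | succ j ih =>
      intro x hx
      have hloc : iteratedDeriv j h2 =ᶠ[nhds x]
          (fun y => -y * iteratedDeriv (j+1) h y - ((j:ℝ) + 1/2) * iteratedDeriv j h y) := by
        filter_upwards [Ioi_mem_nhds hx] with y hy
        exact ih y hy
      rw [iteratedDeriv_succ, hloc.deriv_eq]
      have hA := iterHD hsm (j+1) x hx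
      have hB := iterHD hsm j x hx
      have hd : HasDerivAt
          (fun y => -y * iteratedDeriv (j+1) h y - ((j:ℝ) + 1/2) * iteratedDeriv j h y)
          ((-1) * iteratedDeriv (j+1) h x + (-x) * iteratedDeriv (j+2) h x
            - ((j:ℝ) + 1/2) * iteratedDeriv (j+1) h x) x := by
        exact (((hasDerivAt_id x).neg.mul hA)).sub (hB.const_mul ((j:ℝ) + 1/2))
      rw [hd.deriv]
      push_cast
      ring
  have hcd2 : ContDiffOn ℝ (⊤ : ℕ∞) h2 (Ioi 0) := by
    have hψ : ContDiffOn ℝ (⊤ : ℕ∞) (fun x : ℝ => -x * deriv h x - (1/2) * h x) (Ioi 0) := by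
      have hdcd : ContDiffOn ℝ (⊤ : ℕ∞) (deriv h) (Ioi 0) := by
        have := iterCD hsm 1
        rwa [iteratedDeriv_one] at this
      exact ((contDiff_id.neg.contDiffOn).mul hdcd).sub (contDiffOn_const.mul hsm)
    exact hψ.congr heq
  refine ⟨hcd2, fun j => ?_, fun j => ?_⟩
  · have hev : (fun x : ℝ => -(x ^ ((((j+1):ℕ):ℝ) - α) * iteratedDeriv (j+1) h x)
        - ((j:ℝ) + 1/2) * (x ^ ((j:ℝ) - α) * iteratedDeriv j h x))
        =ᶠ[nhdsWithin 0 (Ioi (0:ℝ))] (fun x => x ^ ((j:ℝ) - α) * iteratedDeriv j h2 x) := by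
      filter_upwards [self_mem_nhdsWithin] with x hx
      have hx' : (0:ℝ) < x := hx
      rw [hform j x hx]
      have hxx : x ^ ((((j+1):ℕ):ℝ) - α) = x ^ ((j:ℝ) - α) * x := by
        rw [← Real.rpow_add_one (ne_of_gt hx')]
        congr 1
        push_cast
        ring
      rw [hxx]
      ring
    have hlim : Tendsto (fun x : ℝ => -(x ^ ((((j+1):ℕ):ℝ) - α) * iteratedDeriv (j+1) h x)
        - ((j:ℝ) + 1/2) * (x ^ ((j:ℝ) - α) * iteratedDeriv j h x))
        (nhdsWithin 0 (Ioi 0)) (nhds 0) := by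
      have := ((h0 (j+1)).neg).sub ((h0 j).const_mul ((j:ℝ) + 1/2))
      simpa using this
    exact hlim.congr' hev
  · have hev : (fun x : ℝ => -(x ^ ((((j+1):ℕ):ℝ) + 1 + α) * iteratedDeriv (j+1) h x)
        - ((j:ℝ) + 1/2) * (x ^ ((j:ℝ) + 1 + α) * iteratedDeriv j h x))
        =ᶠ[atTop] (fun x => x ^ ((j:ℝ) + 1 + α) * iteratedDeriv j h2 x) := by
      filter_upwards [eventually_gt_atTop (0:ℝ)] with x hx'
      rw [hform j x hx']
      have hxx : x ^ ((((j+1):ℕ):ℝ) + 1 + α) = x ^ ((j:ℝ) + 1 + α) * x := by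
        rw [← Real.rpow_add_one (ne_of_gt hx')]
        congr 1
        push_cast
        ring
      rw [hxx]
      ring
    have hlim : Tendsto (fun x : ℝ => -(x ^ ((((j+1):ℕ):ℝ) + 1 + α) * iteratedDeriv (j+1) h x)
        - ((j:ℝ) + 1/2) * (x ^ ((j:ℝ) + 1 + α) * iteratedDeriv j h x))
        atTop (nhds 0) := by
      have := ((hi (j+1)).neg).sub ((hi j).const_mul ((j:ℝ) + 1/2))
      simpa using this
    exact hlim.congr' hev



lemma intLoc {f : ℝ → ℝ} {C a b : ℝ} (hf : ContinuousOn f (Ioi 0)) (ha : 0 < a)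
    (hC0 : 0 ≤ C) (hC : ∀ x ∈ Ioi (0:ℝ), |f x| ≤ C * min (x ^ a) (x ^ (-b)))
    {u : ℝ} (hu : 0 < u) : IntegrableOn f (Ioc 0 u) := by
  apply Integrable.mono' (g := fun x : ℝ => C * x ^ a)
  · apply Integrable.const_mul
    have : IntegrableOn (fun x : ℝ => x ^ a) (Ioo (0:ℝ) u) :=
      (intervalIntegral.integrableOn_Ioo_rpow_iff hu).mpr (by linarith)
    have h2 : IntegrableOn (fun x : ℝ => x ^ a) (Ioc (0:ℝ) u) := by
      rw [integrableOn_Ioc_iff_integrableOn_Ioo]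
      exact this
    exact h2
  · exact (hf.mono Ioc_subset_Ioi_self).aestronglyMeasurable measurableSet_Ioc
  · filter_upwards [ae_restrict_mem measurableSet_Ioc] with y hy
    rw [Real.norm_eq_abs]
    calc |f y| ≤ C * min (y ^ a) (y ^ (-b)) := hC y hy.1
      _ ≤ C * y ^ a := mul_le_mul_of_nonneg_left (min_le_left _ _) hC0



end StmtAux

/-- for the recursive family with `r_k = 1/2`, the coefficients
`b_k = ∫₀^1 g_k^×(t) dt` satisfy `b_{k+1} = -∫₀^∞ {x} g_k(x)/x dx + b_k/2`. -/
theorem stmt18 (α : ℝ) (hα : 0 < α) (g : ℕ → ℝ → ℝ)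
    (hsmooth : ContDiffOn ℝ (⊤ : ℕ∞) (g 0) (Ioi 0))
    (hlim0 : ∀ k : ℕ, Tendsto (fun x : ℝ => x ^ ((k : ℝ) - α) * iteratedDeriv k (g 0) x)
      (nhdsWithin 0 (Ioi 0)) (nhds 0))
    (hliminf : ∀ k : ℕ,
      Tendsto (fun x : ℝ => x ^ ((k : ℝ) + 1 + α) * iteratedDeriv k (g 0) x)
      atTop (nhds 0))
    (hrec : ∀ k : ℕ, ∀ x ∈ Ioi (0 : ℝ),
      g (k + 1) x = -x * deriv (g k) x - (1 / 2) * g k x)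
    (b : ℕ → ℝ) (hb : ∀ k, b k = ∫ t in Ioo (0 : ℝ) 1, mulConvFract (g k) t) :
    ∀ k : ℕ,
      b (k + 1) = -(∫ x in Ioi (0 : ℝ), Int.fract x * g k x / x) + (1 / 2) * b k := by
  intro k
  have hP : ∀ m : ℕ, ContDiffOn ℝ (⊤ : ℕ∞) (g m) (Ioi 0) ∧
      (∀ j : ℕ, Tendsto (fun x : ℝ => x ^ ((j:ℝ) - α) * iteratedDeriv j (g m) x)
        (nhdsWithin 0 (Ioi 0)) (nhds 0)) ∧
      (∀ j : ℕ, Tendsto (fun x : ℝ => x ^ ((j:ℝ) + 1 + α) * iteratedDeriv j (g m) x)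
        atTop (nhds 0)) := by
    intro m
    induction m with
    | zero => exact ⟨hsmooth, hlim0, hliminf⟩
    | succ m ih => exact hered ih.1 ih.2.1 ih.2.2 (hrec m)
  obtain ⟨hsm, h0s, his⟩ := hP k
  obtain ⟨hsm', h0s', his'⟩ := hP (k+1)
  have h1α : (0:ℝ) < 1 + α := by linarith
  have hcont : ContinuousOn (g k) (Ioi 0) := hsm.continuousOn
  have hcont' : ContinuousOn (g (k+1)) (Ioi 0) := hsm'.continuousOn
  have hdcont : ContinuousOn (deriv (g k)) (Ioi 0) := by
    have := (iterCD hsm 1).continuousOn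
    rwa [iteratedDeriv_one] at this
  have hf2cont : ContinuousOn (fun x : ℝ => x * deriv (g k) x) (Ioi 0) :=
    continuousOn_id.mul hdcont
  -- limits for g k
  have h0g : Tendsto (fun x : ℝ => x ^ (-α) * g k x) (nhdsWithin 0 (Ioi 0)) (nhds 0) := by
    have := h0s 0; simpa using this
  have hIg : Tendsto (fun x : ℝ => x ^ (1+α) * g k x) atTop (nhds 0) := by
    have := his 0; simpa using this
  obtain ⟨Cg, hCg0, hCg⟩ := exists_bound hcont hα h1α h0g hIg
  -- limits for g (k+1)
  have h0g' : Tendsto (fun x : ℝ => x ^ (-α) * g (k+1) x) (nhdsWithin 0 (Ioi 0)) (nhds 0) := by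
    have := h0s' 0; simpa using this
  have hIg' : Tendsto (fun x : ℝ => x ^ (1+α) * g (k+1) x) atTop (nhds 0) := by
    have := his' 0; simpa using this
  obtain ⟨Cg', hCg0', hCg'⟩ := exists_bound hcont' hα h1α h0g' hIg'
  -- limits for x * deriv (g k) x
  have h0d : Tendsto (fun x : ℝ => x ^ (-α) * (x * deriv (g k) x))
      (nhdsWithin 0 (Ioi 0)) (nhds 0) := by
    apply (h0s 1).congr'
    filter_upwards [self_mem_nhdsWithin] with x hx
    have hx' : (0:ℝ) < x := hx
    have hxx : x ^ (((1:ℕ):ℝ) - α) = x ^ (-α) * x := by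
      rw [← Real.rpow_add_one (ne_of_gt hx')]
      congr 1
      push_cast
      ring
    rw [iteratedDeriv_one, hxx]
    ring
  have hId : Tendsto (fun x : ℝ => x ^ (1+α) * (x * deriv (g k) x)) atTop (nhds 0) := by
    apply (his 1).congr'
    filter_upwards [eventually_gt_atTop (0:ℝ)] with x hx'
    have hxx : x ^ (((1:ℕ):ℝ) + 1 + α) = x ^ (1 + α) * x := by
      rw [← Real.rpow_add_one (ne_of_gt hx')]
      congr 1
      push_cast
      ring
    rw [iteratedDeriv_one, hxx]
    ring
  obtain ⟨Cd, hCd0, hCd⟩ := exists_bound hf2cont hα h1α h0d hId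
  -- b expressed via the kernel H
  have hfubg := fub1 hcont hα h1α hCg
  have hfubd := fub1 hf2cont hα h1α hCd
  have hfubg' := fub1 hcont' hα h1α hCg'
  have hbk : b k = ∫ x in Ioi (0:ℝ), g k x * ∫ u in Ioi x, Int.fract u / u ^ 2 := by
    rw [hb k]
    simp only [mulConvFract]
    exact hfubg.2
  have hbk1 : b (k+1) = ∫ x in Ioi (0:ℝ), g (k+1) x * ∫ u in Ioi x, Int.fract u / u ^ 2 := by
    rw [hb (k+1)]
    simp only [mulConvFract]
    exact hfubg'.2
  -- split the integrand using the recursion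
  have hI1 : Integrable (fun x => -((x * deriv (g k) x) * ∫ u in Ioi x, Int.fract u / u ^ 2))
      (volume.restrict (Ioi (0:ℝ))) := hfubd.1.neg
  have hI2 : Integrable (fun x => (1/2) * (g k x * ∫ u in Ioi x, Int.fract u / u ^ 2))
      (volume.restrict (Ioi (0:ℝ))) := hfubg.1.const_mul (1/2)
  have hsplit : (∫ x in Ioi (0:ℝ), g (k+1) x * ∫ u in Ioi x, Int.fract u / u ^ 2)
      = -(∫ x in Ioi (0:ℝ), (x * deriv (g k) x) * ∫ u in Ioi x, Int.fract u / u ^ 2)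
        - (1/2) * ∫ x in Ioi (0:ℝ), g k x * ∫ u in Ioi x, Int.fract u / u ^ 2 := by
    rw [show (∫ x in Ioi (0:ℝ), g (k+1) x * ∫ u in Ioi x, Int.fract u / u ^ 2)
        = ∫ x in Ioi (0:ℝ), (-((x * deriv (g k) x) * ∫ u in Ioi x, Int.fract u / u ^ 2)
            - (1/2) * (g k x * ∫ u in Ioi x, Int.fract u / u ^ 2)) from
      setIntegral_congr_fun measurableSet_Ioi (fun x hx => by rw [hrec k x hx]; ring)]
    rw [integral_sub hI1 hI2, integral_neg, integral_const_mul]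
  -- FTC on (0, u]
  have hgd : ∀ x ∈ Ioi (0:ℝ), HasDerivAt (g k) (deriv (g k) x) x := by
    intro x hx
    have := iterHD hsm 0 x hx
    simpa [iteratedDeriv_one] using this
  have h0φ : Tendsto (fun x : ℝ => x * g k x) (nhdsWithin 0 (Ioi 0)) (nhds 0) := by
    have hA : Tendsto (fun x : ℝ => x ^ (1+α)) (nhdsWithin 0 (Ioi 0)) (nhds 0) := by
      have hcont0 : ContinuousAt (fun x : ℝ => x ^ (1+α)) 0 :=
        Real.continuousAt_rpow_const 0 (1+α) (Or.inr h1α.le)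
      have h2 := hcont0.continuousWithinAt (s := Ioi (0:ℝ))
      have h3 : (0:ℝ) ^ (1+α) = 0 := Real.zero_rpow (ne_of_gt h1α)
      unfold ContinuousWithinAt at h2
      simpa [h3] using h2
    have hmul := hA.mul h0g
    rw [mul_zero] at hmul
    apply hmul.congr'
    filter_upwards [self_mem_nhdsWithin] with x hx
    have hx' : (0:ℝ) < x := hx
    rw [← mul_assoc, ← Real.rpow_add hx', show (1+α) + (-α) = (1:ℝ) by ring, Real.rpow_one]
  have hftc : ∀ u ∈ Ioi (0:ℝ), (∫ x in Ioo (0:ℝ) u, x * deriv (g k) x)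
      = u * g k u - ∫ x in Ioo (0:ℝ) u, g k x := by
    intro u hu
    have hu' : (0:ℝ) < u := hu
    have hintg : IntegrableOn (g k) (Ioc 0 u) := intLoc hcont hα hCg0 hCg hu'
    have hintd : IntegrableOn (fun x : ℝ => x * deriv (g k) x) (Ioc 0 u) :=
      intLoc hf2cont hα hCd0 hCd hu'
    have hd : ∀ x ∈ Ioi (0:ℝ),
        HasDerivAt (fun y : ℝ => y * g k y) (g k x + x * deriv (g k) x) x := by
      intro x hx
      have h2 := (hasDerivAt_id x).mul (hgd x hx)
      exact h2.congr_deriv (by simp)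
    have hsum : ∫ x in Ioo (0:ℝ) u, (g k x + x * deriv (g k) x) = u * g k u :=
      ftc_zero hu' hd (hintg.add hintd) h0φ
    have hadd : ∫ x in Ioo (0:ℝ) u, (g k x + x * deriv (g k) x)
        = (∫ x in Ioo (0:ℝ) u, g k x) + ∫ x in Ioo (0:ℝ) u, x * deriv (g k) x :=
      integral_add (hintg.mono_set Ioo_subset_Ioc_self) (hintd.mono_set Ioo_subset_Ioc_self)
    rw [hadd] at hsum
    linarith
  -- second Fubini
  have h2g := fub2 hcont hα h1α hCg
  have h2d := fub2 hf2cont hα h1α hCd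
  have hAint : Integrable (fun u => Int.fract u / u ^ 2 * (u * g k u))
      (volume.restrict (Ioi (0:ℝ))) := by
    have hwhole : Integrable
        (fun u => Int.fract u / u ^ 2 * (u * g k u - ∫ x in Ioo (0:ℝ) u, g k x))
        (volume.restrict (Ioi (0:ℝ))) := by
      apply h2d.1.congr
      filter_upwards [ae_restrict_mem measurableSet_Ioi] with u hu
      rw [hftc u hu]
    apply (hwhole.add h2g.1).congr
    filter_upwards [] with u
    simp only [Pi.add_apply]
    ring
  have hkey : (∫ x in Ioi (0:ℝ), (x * deriv (g k) x) * ∫ u in Ioi x, Int.fract u / u ^ 2)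
      = (∫ x in Ioi (0:ℝ), Int.fract x * g k x / x)
        - ∫ x in Ioi (0:ℝ), g k x * ∫ u in Ioi x, Int.fract u / u ^ 2 := by
    rw [h2d.2, h2g.2]
    calc (∫ u in Ioi (0:ℝ), Int.fract u / u ^ 2 * ∫ x in Ioo (0:ℝ) u, x * deriv (g k) x)
        = ∫ u in Ioi (0:ℝ), (Int.fract u / u ^ 2 * (u * g k u)
            - Int.fract u / u ^ 2 * ∫ x in Ioo (0:ℝ) u, g k x) := by
          apply setIntegral_congr_fun measurableSet_Ioi
          intro u hu
          dsimp only
          rw [hftc u hu]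
          ring
      _ = (∫ u in Ioi (0:ℝ), Int.fract u / u ^ 2 * (u * g k u))
            - ∫ u in Ioi (0:ℝ), Int.fract u / u ^ 2 * ∫ x in Ioo (0:ℝ) u, g k x :=
          integral_sub hAint h2g.1
      _ = (∫ x in Ioi (0:ℝ), Int.fract x * g k x / x)
            - ∫ u in Ioi (0:ℝ), Int.fract u / u ^ 2 * ∫ x in Ioo (0:ℝ) u, g k x := by
          congr 1
          apply setIntegral_congr_fun measurableSet_Ioi
          intro u hu
          have hu' : (0:ℝ) < u := hu
          have hune : u ≠ 0 := ne_of_gt hu'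
          field_simp
  rw [hbk1, hsplit, hkey, ← hbk]
  ring
end
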